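/- arXiv:1905.04551 — 5 statements merged into one kernel-verified Lean document; each statement's English description precedes it below -/
import Mathlib

section
/- For every odd integer k ≥ 3, the set M = {v_i u_i^1, v_i u_i^2, v_i u_i^3 : 1 ≤ i ≤ k} of edges of the flower snark J_k forms a perfect pseudo-matching whose components are k disjoint copies of K_{1,3}, and the graph J_k / M obtained by contracting each component of M to a single vertex is a multigraph on k vertices v_1', ..., v_k' consisting of three edge-disjoint Hamiltonian cycles v_1' v_2' ... v_k' v_1'; in particular J_k / M is planar. -/
open SimpleGraph Classical

/-- The claw `K_{1,3}`: vertex `0` is the center, adjacent to `1,2,3`. -/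
def clawGraph : SimpleGraph (Fin 4) :=
  SimpleGraph.fromEdgeSet {s((0:Fin 4),1), s((0:Fin 4),2), s((0:Fin 4),3)}

/-- A graph is cubic if every vertex has exactly 3 neighbours. -/
def IsCubic {V : Type*} (G : SimpleGraph V) : Prop :=
  ∀ v : V, (G.neighborSet v).ncard = 3

/-- `M` is a perfect pseudo-matching of `G`: a spanning subgraph each of whose
connected components is isomorphic to `K₂` or to the claw `K_{1,3}`. -/
def IsPerfectPseudoMatching {V : Type*} (G M : SimpleGraph V) : Prop :=
  M ≤ G ∧ ∀ c : M.ConnectedComponent,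
    Nonempty ((M.induce c.supp) ≃g (⊤ : SimpleGraph (Fin 2))) ∨
    Nonempty ((M.induce c.supp) ≃g clawGraph)

/-- `C` is a cycle, given as a subgraph of `G`: nonempty edge set, every vertex of
degree `0` or `2`, and connected on its support. -/
def IsCycleSubgraph {V : Type*} (G C : SimpleGraph V) : Prop :=
  C ≤ G ∧ C.edgeSet.Nonempty ∧
  (∀ v : V, (C.neighborSet v).ncard = 0 ∨ (C.neighborSet v).ncard = 2) ∧
  (∀ u v : V, u ∈ C.support → v ∈ C.support → C.Reachable u v)

/-- A dominating cycle: every edge of `G` has an endpoint on `C`. -/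
def IsDominatingCycle {V : Type*} (G C : SimpleGraph V) : Prop :=
  IsCycleSubgraph G C ∧ ∀ u v : V, G.Adj u v → u ∈ C.support ∨ v ∈ C.support

/-- `C` is a connected component of `D` which is a cycle. -/
def IsComponentCycleOf {V : Type*} (D C : SimpleGraph V) : Prop :=
  IsCycleSubgraph D C ∧ ∀ u v : V, u ∈ C.support → D.Adj u v → C.Adj u v

/-- A proper 3-edge-colouring of `G`. -/
def IsProper3EdgeColoring {V : Type*} (G : SimpleGraph V) (c : Sym2 V → Fin 3) : Prop :=
  ∀ e ∈ G.edgeSet, ∀ f ∈ G.edgeSet, e ≠ f → (∃ v : V, v ∈ e ∧ v ∈ f) → c e ≠ c f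

def Proper3EdgeColorable {V : Type*} (G : SimpleGraph V) : Prop :=
  ∃ c : Sym2 V → Fin 3, IsProper3EdgeColoring G c

/-- A cycle double cover of `G` containing, among its members, specified cycles. -/
def IsCycleDoubleCover {V : Type*} (G : SimpleGraph V) {n : ℕ}
    (F : Fin n → SimpleGraph V) : Prop :=
  (∀ i, IsCycleSubgraph G (F i)) ∧
  ∀ e ∈ G.edgeSet, {i : Fin n | e ∈ (F i).edgeSet}.ncard = 2

/-- A cycle in the contracted multigraph `G/M`: a cyclic sequence of pairwise distinct
edges of `G \ E(M)` joining pairwise distinct components of `M`. -/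
structure ContractedCycle {V : Type*} (G M : SimpleGraph V) where
  n : ℕ
  hn : 0 < n
  edge : Fin n → Sym2 V
  vtx : Fin n → M.ConnectedComponent
  mem : ∀ i, edge i ∈ G.edgeSet \ M.edgeSet
  edge_inj : Function.Injective edge
  vtx_inj : Function.Injective vtx
  ends : ∀ i : Fin n, ∃ x y : V, edge i = s(x, y) ∧
    M.connectedComponentMk x = vtx i ∧
    M.connectedComponentMk y = vtx (i + ⟨1 % n, Nat.mod_lt _ hn⟩)

/-- The edge set of a contracted cycle. -/
def ContractedCycle.edges {V : Type*} {G M : SimpleGraph V} (c : ContractedCycle G M) :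
    Set (Sym2 V) := Set.range c.edge

/-- A decomposition of the contracted multigraph `G/M` into cycles, compatible with the
transition system `T_M` induced by the cycles of `G \ E(M)` (i.e. no cycle of the
decomposition contains two distinct edges sharing a vertex of `G`). -/
def IsCompatibleCycleDecomposition {V : Type*} (G M : SimpleGraph V)
    (D : Set (ContractedCycle G M)) : Prop :=
  (∀ e ∈ G.edgeSet \ M.edgeSet, ∃ c ∈ D, e ∈ c.edges) ∧
  (∀ c ∈ D, ∀ c' ∈ D, c ≠ c' → Disjoint c.edges c'.edges) ∧
  (∀ c ∈ D, ∀ e ∈ c.edges, ∀ f ∈ c.edges, e ≠ f → ¬ ∃ v : V, v ∈ e ∧ v ∈ f)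

/-- The intersection graph of a family of cycles of `G/M`: two distinct cycles are
adjacent iff they meet in a vertex of `G/M`. -/
def intersectionGraph {V : Type*} (G M : SimpleGraph V) (D : Set (ContractedCycle G M)) :
    SimpleGraph D where
  Adj a b := a ≠ b ∧ ∃ w : M.ConnectedComponent,
    w ∈ Set.range a.1.vtx ∧ w ∈ Set.range b.1.vtx
  symm := by
    constructor
    rintro a b ⟨hne, w, h1, h2⟩
    exact ⟨hne.symm, w, h2, h1⟩
  loopless := by
    constructor
    rintro a ⟨hne, -⟩
    exact hne rfl

/-- `H` is a minor of `G` (branch-set definition). -/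
def IsMinorOf {α β : Type*} (H : SimpleGraph α) (G : SimpleGraph β) : Prop :=
  ∃ f : α → Set β, (∀ a, (f a).Nonempty) ∧ (∀ a, (G.induce (f a)).Connected) ∧
    (Pairwise (Function.onFun Disjoint f)) ∧
    ∀ a b, H.Adj a b → ∃ x ∈ f a, ∃ y ∈ f b, G.Adj x y

/-- Planarity, via Wagner's theorem: no `K₅` and no `K_{3,3}` minor. -/
def IsPlanar {β : Type*} (G : SimpleGraph β) : Prop :=
  ¬ IsMinorOf (⊤ : SimpleGraph (Fin 5)) G ∧
  ¬ IsMinorOf (completeBipartiteGraph (Fin 3) (Fin 3)) G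

/-- The simple graph underlying the contraction `G/M`. -/
def contractedSimple {V : Type*} (G M : SimpleGraph V) : SimpleGraph M.ConnectedComponent where
  Adj c d := c ≠ d ∧ ∃ x y : V, G.Adj x y ∧ ¬ M.Adj x y ∧
    M.connectedComponentMk x = c ∧ M.connectedComponentMk y = d
  symm := by
    constructor
    rintro c d ⟨hne, x, y, h1, h2, h3, h4⟩
    exact ⟨hne.symm, y, x, h1.symm, fun h => h2 h.symm, h4, h3⟩
  loopless := by
    constructor
    rintro c ⟨hne, -⟩
    exact hne rfl

/-- Number of endpoints (with multiplicity) of the edge `e` lying in the part `c`. -/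
noncomputable def endCount {V α : Type*} (e : Sym2 V) (g : V → α) (c : α) : ℕ :=
  Sym2.lift ⟨fun x y => (if g x = c then 1 else 0) + (if g y = c then 1 else 0),
    fun x y => by dsimp; omega⟩ e

/-- The degree of a component `c` of `M` in the contracted multigraph `G/M`. -/
noncomputable def contractedDegree {V : Type*} (G M : SimpleGraph V)
    (c : M.ConnectedComponent) : ℕ :=
  ∑ᶠ e ∈ (G.edgeSet \ M.edgeSet), endCount e (M.connectedComponentMk) c

/-- The flower graph `J_k`, on vertices `v_i = Sum.inl i` and `u_i^{j+1} = Sum.inr (i,j)`. -/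
def flowerGraph (k : ℕ) (hk : 0 < k) : SimpleGraph (Fin k ⊕ Fin k × Fin 3) :=
  let one : Fin k := ⟨1 % k, Nat.mod_lt 1 hk⟩
  let zero : Fin k := ⟨0, hk⟩
  let lst : Fin k := ⟨k - 1, by omega⟩
  SimpleGraph.fromEdgeSet (
    {e | ∃ (i : Fin k) (j : Fin 3), e = s(Sum.inl i, Sum.inr (i, j))} ∪
    {e | ∃ i : Fin k, e = s(Sum.inr (i, 0), Sum.inr (i + one, 0))} ∪
    {e | ∃ i : Fin k, i.val + 1 < k ∧
      (e = s(Sum.inr (i, 1), Sum.inr (i + one, 1)) ∨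
       e = s(Sum.inr (i, 2), Sum.inr (i + one, 2)))} ∪
    {s(Sum.inr (lst, 1), Sum.inr (zero, 2)), s(Sum.inr (lst, 2), Sum.inr (zero, 1))})

/-- The set of spokes `v_i u_i^j` of the flower graph, as a spanning subgraph. -/
def flowerSpokes (k : ℕ) : SimpleGraph (Fin k ⊕ Fin k × Fin 3) :=
  SimpleGraph.fromEdgeSet {e | ∃ (i : Fin k) (j : Fin 3), e = s(Sum.inl i, Sum.inr (i, j))}

/-!
Each spoke star `{v_i, u_i^1, u_i^2, u_i^3}` is a component of `M` isomorphic to `K_{1,3}`, so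
the vertices of `J_k / M` are indexed by `i`. Every other edge joins some `u_i^a` to some
`u_{i+1}^b`; sorting these edges by the colour `a`, where the colours `1` and `2` are exchanged
at the wrap-around of the twisted inner cycle, gives three edge sequences each running once
around the stars in cyclic order. Hence the simple graph underlying `J_k / M` is the cycle
`C_k`, which is planar: in a graph of maximum degree two a connected vertex set has at most two
outside neighbours, whereas the branch set of a vertex of degree three in a minor needs three.
-/

open Sum

namespace SimpleGraph

variable {V : Type*} [Fintype V] {G : SimpleGraph V} [DecidableRel G.Adj]

theorem Connected.not_three_outer_neighbors_of_degree_le_two (hdeg : ∀ v, G.degree v ≤ 2)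
    {A : Set V} (hA : (G.induce A).Connected) {x y : Fin 3 → V} (hx : ∀ i, x i ∈ A)
    (hy : ∀ i, y i ∉ A) (hy_inj : Function.Injective y) (hxy : ∀ i, G.Adj (x i) (y i)) :
    False := by
  -- At most `2 * |A|` darts start in `A`; the `≥ |A| - 1` edges inside `A` already supply
  -- `2 * |A| - 2` of them, leaving no room for the three darts `x i → y i`.
  let dartFromA : (G.induce A).Dart ⊕ Fin 3 → {d : G.Dart // d.fst ∈ A} :=
    Sum.elim (fun d => ⟨⟨(d.fst.1, d.snd.1), d.adj⟩, d.fst.2⟩)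
      (fun i => ⟨⟨(x i, y i), hxy i⟩, hx i⟩)
  have h_inj : Function.Injective dartFromA := by
    rintro (d | i) (d' | i') h <;> simp only [dartFromA, Sum.elim_inl, Sum.elim_inr,
      Subtype.mk.injEq, Dart.ext_iff, Prod.mk.injEq] at h
    · exact congrArg inl (Dart.ext _ _ (Prod.ext (Subtype.ext h.1) (Subtype.ext h.2)))
    · exact absurd (h.2 ▸ d.snd.2) (hy i')
    · exact absurd (h.2 ▸ d'.snd.2) (hy i)
    · exact congrArg inr (hy_inj h.2)
  have h_lower : 2 * (G.induce A).edgeFinset.card + 3 ≤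
      Fintype.card {d : G.Dart // d.fst ∈ A} := by
    simpa [dart_card_eq_twice_card_edges] using Fintype.card_le_of_injective _ h_inj
  have h_upper : Fintype.card {d : G.Dart // d.fst ∈ A} ≤ 2 * A.toFinset.card := by
    rw [Fintype.card_subtype]
    refine Finset.card_le_mul_card_image_of_maps_to (f := fun d : G.Dart => d.fst)
      (by simp) 2 fun v _ => ?_
    calc _ ≤ (Finset.univ.filter fun d : G.Dart => d.fst = v).card :=
          Finset.card_le_card fun d => by simp +contextual
      _ = G.degree v := G.dart_fst_fiber_card_eq_degree v
      _ ≤ 2 := hdeg v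
  have h_conn := hA.card_vert_le_card_edgeSet_add_one
  rw [Nat.card_coe_set_eq, Set.ncard_eq_toFinset_card', Nat.card_eq_fintype_card,
    ← edgeFinset_card] at h_conn
  omega

theorem cycleGraph_degree_le_two {n : ℕ} (v : Fin n) : (cycleGraph n).degree v ≤ 2 := by
  match n with
  | 0 => exact v.elim0
  | 1 => simp [cycleGraph_one_eq_bot]
  | n + 2 => exact cycleGraph_degree_two_le ▸ Finset.card_le_two

theorem cycleGraph_adj_iff_eq_add_one {k : ℕ} [NeZero k] (hk : 1 < k) {i j : Fin k} :
    (cycleGraph k).Adj i j ↔ i = j + 1 ∨ j = i + 1 := by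
  have h_one (d : Fin k) : d.val = 1 ↔ d = 1 := by
    rw [Fin.ext_iff, Fin.val_one', Nat.mod_eq_of_lt hk]
  rw [cycleGraph_adj', h_one, h_one, sub_eq_iff_eq_add, sub_eq_iff_eq_add, add_comm 1,
    add_comm 1]

end SimpleGraph

theorem IsMinorOf.of_iso {α β γ : Type*} {H : SimpleGraph α} {G : SimpleGraph β}
    {G' : SimpleGraph γ} (h : IsMinorOf H G) (e : G ≃g G') : IsMinorOf H G' := by
  obtain ⟨f, h_ne, h_conn, h_disj, h_adj⟩ := h
  refine ⟨fun a => e '' f a, fun a => (h_ne a).image _, fun a => ?_,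
    fun a b hab => (Set.disjoint_image_iff e.injective).mpr (h_disj hab), fun a b hab => ?_⟩
  · refine (h_conn a).map ⟨fun x : f a => ⟨e x, x.1, x.2, rfl⟩, e.map_adj_iff.mpr⟩ ?_
    rintro ⟨_, x, hx, rfl⟩
    exact ⟨⟨x, hx⟩, rfl⟩
  · obtain ⟨x, hx, y, hy, hxy⟩ := h_adj a b hab
    exact ⟨e x, ⟨x, hx, rfl⟩, e y, ⟨y, hy, rfl⟩, e.map_adj_iff.mpr hxy⟩

theorem IsPlanar.of_iso {β γ : Type*} {G : SimpleGraph β} {G' : SimpleGraph γ}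
    (h : IsPlanar G) (e : G ≃g G') : IsPlanar G' :=
  ⟨fun h5 => h.1 (h5.of_iso e.symm), fun h33 => h.2 (h33.of_iso e.symm)⟩

theorem not_isMinorOf_of_degree_le_two {α V : Type*} [Fintype V] {H : SimpleGraph α}
    {G : SimpleGraph V} [DecidableRel G.Adj] (hdeg : ∀ v, G.degree v ≤ 2) {a : α}
    {b : Fin 3 → α} (hb : Function.Injective b) (hab : ∀ i, H.Adj a (b i)) :
    ¬ IsMinorOf H G := by
  rintro ⟨f, -, h_conn, h_disj, h_adj⟩
  choose x hx y hy hxy using fun i => h_adj a (b i) (hab i)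
  refine (h_conn a).not_three_outer_neighbors_of_degree_le_two hdeg hx
    (fun i hya => Set.disjoint_left.mp (h_disj (hab i).ne) hya (hy i)) (fun i j hij => ?_) hxy
  by_contra hne
  exact Set.disjoint_left.mp (h_disj (hb.ne hne)) (hy i) (hij ▸ hy j)

theorem isPlanar_of_degree_le_two {V : Type*} [Fintype V] {G : SimpleGraph V}
    [DecidableRel G.Adj] (hdeg : ∀ v, G.degree v ≤ 2) : IsPlanar G :=
  ⟨not_isMinorOf_of_degree_le_two hdeg (a := 0) (b := ![1, 2, 3]) (by decide) (by decide),
    not_isMinorOf_of_degree_le_two hdeg (a := inl 0) (b := inr) inr_injective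
      fun _ => by simp⟩

theorem isPlanar_cycleGraph (n : ℕ) : IsPlanar (cycleGraph n) :=
  isPlanar_of_degree_le_two cycleGraph_degree_le_two

theorem Fin.add_one_eq_zero_iff_val_add_one_eq {k : ℕ} [NeZero k] (i : Fin k) :
    i + 1 = 0 ↔ i.val + 1 = k := by
  rw [Fin.ext_iff, Fin.val_add, Fin.val_one', Fin.val_zero, Nat.add_mod_mod]
  refine ⟨fun h => ?_, fun h => by rw [h, Nat.mod_self]⟩
  by_contra hne
  rw [Nat.mod_eq_of_lt (by omega)] at h
  omega

theorem Fin.one_ne_zero_of_one_lt {k : ℕ} [NeZero k] (hk : 1 < k) : (1 : Fin k) ≠ 0 := by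
  simpa [Fin.ext_iff, Fin.val_one'] using hk.ne'

theorem clawGraph_adj {a b : Fin 4} : clawGraph.Adj a b ↔ (a = 0 ↔ b ≠ 0) := by
  rw [clawGraph, fromEdgeSet_adj]
  simp only [Set.mem_insert_iff, Set.mem_singleton_iff, Sym2.eq_iff]
  revert a b
  decide

section FlowerSnark

variable {k : ℕ}

def spokeIndex : Fin k ⊕ Fin k × Fin 3 → Fin k := Sum.elim id Prod.fst

theorem flowerSpokes_adj {v w : Fin k ⊕ Fin k × Fin 3} :
    (flowerSpokes k).Adj v w ↔ spokeIndex v = spokeIndex w ∧ v.isLeft ≠ w.isLeft := by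
  rcases v with i | ⟨i, j⟩ <;> rcases w with i' | ⟨i', j'⟩ <;>
    simp [flowerSpokes, spokeIndex, eq_comm]

theorem flowerSpokes_connectedComponentMk_eq_iff {v w : Fin k ⊕ Fin k × Fin 3} :
    (flowerSpokes k).connectedComponentMk v = (flowerSpokes k).connectedComponentMk w ↔
      spokeIndex v = spokeIndex w := by
  refine ⟨fun h => ?_, fun h => ?_⟩
  · obtain ⟨p⟩ := ConnectedComponent.exact h
    clear h
    induction p with
    | nil => rfl
    | cons hadj _ ih => exact (flowerSpokes_adj.mp hadj).1.trans ih
  · suffices ∀ v, (flowerSpokes k).connectedComponentMk v =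
        (flowerSpokes k).connectedComponentMk (inl (spokeIndex v)) by rw [this v, this w, h]
    rintro (i | ⟨i, j⟩)
    · rfl
    · exact ConnectedComponent.connectedComponentMk_eq_of_adj
        (flowerSpokes_adj.mpr (by simp [spokeIndex]))

theorem flowerSpokes_connectedComponentMk_bijective :
    Function.Bijective fun i : Fin k => (flowerSpokes k).connectedComponentMk (inl i) :=
  ⟨fun _ _ h => flowerSpokes_connectedComponentMk_eq_iff.mp h,
    fun c => c.ind fun v => ⟨spokeIndex v, flowerSpokes_connectedComponentMk_eq_iff.mpr rfl⟩⟩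

theorem mem_supp_flowerSpokes_connectedComponentMk_inl {i : Fin k}
    {v : Fin k ⊕ Fin k × Fin 3} :
    v ∈ ((flowerSpokes k).connectedComponentMk (inl i)).supp ↔ spokeIndex v = i :=
  (ConnectedComponent.mem_supp_iff _ _).trans flowerSpokes_connectedComponentMk_eq_iff

def spokeStarIsoClaw (i : Fin k) :
    (flowerSpokes k).induce ((flowerSpokes k).connectedComponentMk (inl i)).supp ≃g
      clawGraph where
  toFun v := Sum.elim (fun _ => 0) (fun p => p.2.succ) v.1
  invFun n := ⟨Fin.cases (inl i) (fun j => inr (i, j)) n, by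
    rw [mem_supp_flowerSpokes_connectedComponentMk_inl]
    cases n using Fin.cases <;> rfl⟩
  left_inv := by
    rintro ⟨v, hv⟩
    rw [mem_supp_flowerSpokes_connectedComponentMk_inl] at hv
    rcases v with i' | ⟨i', j⟩ <;> cases hv <;> rfl
  right_inv n := by cases n using Fin.cases <;> rfl
  map_rel_iff' := by
    rintro ⟨v, hv⟩ ⟨w, hw⟩
    rw [mem_supp_flowerSpokes_connectedComponentMk_inl] at hv hw
    simp only [comap_adj, Function.Embedding.subtype_apply, Equiv.coe_fn_mk, clawGraph_adj,
      flowerSpokes_adj, hv, hw, true_and]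
    rcases v with i' | ⟨i', j⟩ <;> rcases w with i'' | ⟨i'', j'⟩ <;> simp [Fin.succ_ne_zero]

theorem flowerSpokes_le_flowerGraph (hk : 0 < k) : flowerSpokes k ≤ flowerGraph k hk :=
  fromEdgeSet_mono fun _ he => Or.inl (Or.inl (Or.inl he))

variable [NeZero k]

/-- Colour `0` runs along the outer cycle `u^1`; at the wrap-around `i + 1 = 0` the colours `1`
and `2` are exchanged, following the twist of the inner cycle `u_1^2 … u_k^2 u_1^3 … u_k^3`. -/
def flowerRim (a : Fin 3) (i : Fin k) : Sym2 (Fin k ⊕ Fin k × Fin 3) :=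
  s(inr (i, a), inr (i + 1, if i + 1 = 0 then Equiv.swap 1 2 a else a))

theorem flowerRim_ends (a : Fin 3) (i : Fin k) :
    ∃ x y, flowerRim a i = s(x, y) ∧
      (flowerSpokes k).connectedComponentMk x = (flowerSpokes k).connectedComponentMk (inl i) ∧
      (flowerSpokes k).connectedComponentMk y =
        (flowerSpokes k).connectedComponentMk (inl (i + 1)) :=
  ⟨_, _, rfl, flowerSpokes_connectedComponentMk_eq_iff.mpr rfl,
    flowerSpokes_connectedComponentMk_eq_iff.mpr rfl⟩

theorem flowerRim_inj (hk : 2 < k) {a b : Fin 3} {i j : Fin k} :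
    flowerRim a i = flowerRim b j ↔ a = b ∧ i = j := by
  refine ⟨fun h => ?_, fun h => h.1 ▸ h.2 ▸ rfl⟩
  rcases Sym2.eq_iff.mp h with ⟨h₁, -⟩ | ⟨h₁, h₂⟩
  · simp only [inr.injEq, Prod.mk.injEq] at h₁
    exact ⟨h₁.2, h₁.1⟩
  · simp only [inr.injEq, Prod.mk.injEq] at h₁ h₂
    have h_two : (1 : Fin k) + 1 = 0 := by
      have := h₁.1.trans (congrArg (· + 1) h₂.1.symm)
      rwa [add_assoc, left_eq_add] at this
    rw [Fin.add_one_eq_zero_iff_val_add_one_eq, Fin.val_one', Nat.mod_eq_of_lt (by omega)]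
      at h_two
    omega

theorem flowerRim_mem_edgeSet (hk : 1 < k) (a : Fin 3) (i : Fin k) :
    flowerRim a i ∈ (flowerGraph k (NeZero.pos k)).edgeSet := by
  have h_ne : i ≠ i + 1 := fun h => Fin.one_ne_zero_of_one_lt hk (left_eq_add.mp h)
  refine (mem_edgeSet _).mpr ((fromEdgeSet_adj _).mpr ⟨?_, by simp [h_ne]⟩)
  by_cases h_wrap : i + 1 = 0
  · have h_last : i = ⟨k - 1, Nat.sub_lt (NeZero.pos k) one_pos⟩ :=
      Fin.ext (by have := (Fin.add_one_eq_zero_iff_val_add_one_eq i).mp h_wrap; simp; omega)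
    simp only [h_wrap, if_true]
    fin_cases a
    · exact Or.inl (Or.inl (Or.inr ⟨i, by rw [show i + ⟨1 % k, _⟩ = 0 from h_wrap]; rfl⟩))
    · exact Or.inr (Or.inl (by rw [h_last]; rfl))
    · exact Or.inr (Or.inr (by rw [h_last]; rfl))
  · have h_lt : i.val + 1 < k := lt_of_le_of_ne i.isLt
      (mt (Fin.add_one_eq_zero_iff_val_add_one_eq i).mpr h_wrap)
    simp only [h_wrap, if_false]
    fin_cases a
    · exact Or.inl (Or.inl (Or.inr ⟨i, rfl⟩))
    · exact Or.inl (Or.inr ⟨i, h_lt, Or.inl rfl⟩)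
    · exact Or.inl (Or.inr ⟨i, h_lt, Or.inr rfl⟩)

theorem flowerRim_notMem_edgeSet_flowerSpokes (a : Fin 3) (i : Fin k) :
    flowerRim a i ∉ (flowerSpokes k).edgeSet := by
  simp [flowerRim, flowerSpokes_adj]

theorem exists_flowerRim_eq {e : Sym2 (Fin k ⊕ Fin k × Fin 3)}
    (hJ : e ∈ (flowerGraph k (NeZero.pos k)).edgeSet) (hM : e ∉ (flowerSpokes k).edgeSet) :
    ∃ a i, flowerRim a i = e := by
  have h_one : (⟨1 % k, Nat.mod_lt 1 (NeZero.pos k)⟩ : Fin k) = 1 := rfl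
  have h_zero : (⟨0, NeZero.pos k⟩ : Fin k) = 0 := rfl
  simp only [flowerGraph, flowerSpokes, edgeSet_fromEdgeSet, h_one, h_zero, Set.mem_sdiff,
    Set.mem_union, Set.mem_insert_iff, Set.mem_singleton_iff] at hJ hM
  set last : Fin k := ⟨k - 1, Nat.sub_lt (NeZero.pos k) one_pos⟩
  have h_wrap_last : last + 1 = 0 :=
    (Fin.add_one_eq_zero_iff_val_add_one_eq _).mpr (Nat.sub_add_cancel (NeZero.pos k))
  obtain ⟨(((h_spoke | ⟨i, rfl⟩) | ⟨i, h_lt, h_eq⟩) | rfl | rfl), h_diag⟩ := hJ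
  · exact absurd ⟨h_spoke, h_diag⟩ hM
  · exact ⟨0, i, by rw [flowerRim]; split_ifs <;> rfl⟩
  · have h_wrap : i + 1 ≠ 0 := fun h => by
      have := (Fin.add_one_eq_zero_iff_val_add_one_eq i).mp h; omega
    rcases h_eq with rfl | rfl
    exacts [⟨1, i, by simp only [flowerRim, h_wrap, if_false]⟩,
      ⟨2, i, by simp only [flowerRim, h_wrap, if_false]⟩]
  · exact ⟨1, last, by simp only [flowerRim, h_wrap_last, if_true, Equiv.swap_apply_left]⟩
  · exact ⟨2, last, by simp only [flowerRim, h_wrap_last, if_true, Equiv.swap_apply_right]⟩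

theorem iUnion_range_flowerRim (hk : 1 < k) :
    ⋃ a, Set.range (flowerRim (k := k) a) =
      (flowerGraph k (NeZero.pos k)).edgeSet \ (flowerSpokes k).edgeSet := by
  ext e
  simp only [Set.mem_iUnion, Set.mem_range, Set.mem_sdiff]
  refine ⟨?_, fun ⟨hJ, hM⟩ => exists_flowerRim_eq hJ hM⟩
  rintro ⟨a, i, rfl⟩
  exact ⟨flowerRim_mem_edgeSet hk a i, flowerRim_notMem_edgeSet_flowerSpokes a i⟩

theorem contractedSimple_flowerGraph_adj (hk : 1 < k) {i j : Fin k} :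
    (contractedSimple (flowerGraph k (NeZero.pos k)) (flowerSpokes k)).Adj
        ((flowerSpokes k).connectedComponentMk (inl i))
        ((flowerSpokes k).connectedComponentMk (inl j)) ↔
      i = j + 1 ∨ j = i + 1 := by
  constructor
  · rintro ⟨-, x, y, hJ, hM, hx, hy⟩
    obtain ⟨a, l, hl⟩ := exists_flowerRim_eq ((mem_edgeSet _).mpr hJ) hM
    rw [flowerSpokes_connectedComponentMk_eq_iff] at hx hy
    rcases Sym2.eq_iff.mp hl with ⟨rfl, rfl⟩ | ⟨rfl, rfl⟩
    · exact Or.inr (hy.symm.trans (congrArg (· + 1) hx))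
    · exact Or.inl (hx.symm.trans (congrArg (· + 1) hy))
  · intro h
    wlog h_succ : j = i + 1 generalizing i j
    · exact (this h.symm (h.resolve_right h_succ)).symm
    subst h_succ
    have h_ne : i ≠ i + 1 := fun h => Fin.one_ne_zero_of_one_lt hk (left_eq_add.mp h)
    exact ⟨mt flowerSpokes_connectedComponentMk_eq_iff.mp h_ne, _, _,
      flowerRim_mem_edgeSet hk 0 i, flowerRim_notMem_edgeSet_flowerSpokes 0 i,
      flowerSpokes_connectedComponentMk_eq_iff.mpr rfl,
      flowerSpokes_connectedComponentMk_eq_iff.mpr rfl⟩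

noncomputable def cycleGraphIsoContractedSimpleFlowerGraph (hk : 1 < k) :
    cycleGraph k ≃g contractedSimple (flowerGraph k (NeZero.pos k)) (flowerSpokes k) where
  toEquiv := Equiv.ofBijective _ flowerSpokes_connectedComponentMk_bijective
  map_rel_iff' :=
    (contractedSimple_flowerGraph_adj hk).trans (cycleGraph_adj_iff_eq_add_one hk).symm

end FlowerSnark

/-- For odd `k ≥ 3`, the spokes of the flower snark `J_k` form a perfect
pseudo-matching `M` all of whose components are claws `K_{1,3}` (one for each `i`, the map
`i ↦ component of v_i` being a bijection), the edges of `J_k \ E(M)` split into three classes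
each of which projects, in `J_k / M`, onto a Hamiltonian cycle `v₁' v₂' … v_k' v₁'`;
in particular `J_k / M` is planar. -/
theorem flowerSnark_spokes_ppm_contraction (k : ℕ) (hk : 3 ≤ k) :
    let J := flowerGraph k (by omega)
    let M := flowerSpokes k
    let cmp : Fin k → M.ConnectedComponent := fun i => M.connectedComponentMk (Sum.inl i)
    IsPerfectPseudoMatching J M ∧
    (∀ c : M.ConnectedComponent, Nonempty ((M.induce c.supp) ≃g clawGraph)) ∧
    Function.Bijective cmp ∧
    (∃ S : Fin 3 → Set (Sym2 (Fin k ⊕ Fin k × Fin 3)),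
      (∀ a b : Fin 3, a ≠ b → Disjoint (S a) (S b)) ∧
      (⋃ a, S a) = J.edgeSet \ M.edgeSet ∧
      (∀ a : Fin 3, ∃ g : Fin k → Sym2 (Fin k ⊕ Fin k × Fin 3),
        Function.Injective g ∧ S a = Set.range g ∧
        ∀ i : Fin k, ∃ x y : Fin k ⊕ Fin k × Fin 3, g i = s(x, y) ∧
          M.connectedComponentMk x = cmp i ∧
          M.connectedComponentMk y = cmp (i + ⟨1 % k, Nat.mod_lt 1 (by omega)⟩))) ∧
    IsPlanar (contractedSimple J M) := by
  intro J M cmp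
  have : NeZero k := ⟨by omega⟩
  have h_cmp : Function.Bijective cmp := flowerSpokes_connectedComponentMk_bijective
  have h_claw (c : M.ConnectedComponent) : Nonempty ((M.induce c.supp) ≃g clawGraph) := by
    obtain ⟨i, rfl⟩ := h_cmp.2 c
    exact ⟨spokeStarIsoClaw i⟩
  refine ⟨⟨flowerSpokes_le_flowerGraph _, fun c => Or.inr (h_claw c)⟩, h_claw, h_cmp,
    ⟨fun a => Set.range (flowerRim a), fun a b hab => ?_, iUnion_range_flowerRim (by omega),
      fun a => ⟨flowerRim a, fun i j h => ((flowerRim_inj hk).mp h).2, rfl, flowerRim_ends a⟩⟩,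
    (isPlanar_cycleGraph k).of_iso (cycleGraphIsoContractedSimpleFlowerGraph (by omega))⟩
  rw [Set.disjoint_left]
  rintro _ ⟨i, rfl⟩ ⟨j, h⟩
  exact hab ((flowerRim_inj hk).mp h).1.symm
end

section
/- Let G be a cubic graph, M a perfect pseudo-matching in G, and suppose the multigraph G/M obtained by contracting the components of M admits a cycle decomposition S compatible with the transition system T_M induced by the cycles of G \ E(M). Then G has a cycle double cover containing all cycles of G \ E(M). -/
open SimpleGraph Classical

/-
Take as double cover the cycles of `G \ E(M)` together with a lift to `G` of every cycle `c` of
`S`. Every component of `M` is a star (`K₂` or `K_{1,3}`), and since `G` is cubic a vertex on an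
edge of `G \ E(M)` is a leaf of its star. By compatibility, `c` enters and leaves each star it
visits at two distinct leaves, which the star joins by a path; the lift of `c` is `c` together
with these paths. An edge outside `M` lies on one cycle of `G \ E(M)` and on the lift of the one
cycle of `S` containing it. An edge of `M` lies on no cycle of `G \ E(M)`; at a leaf `x` it lies
on the lift of `c` exactly when `c` uses one of the two edges of `G \ E(M)` at `x`, and these
belong to two different cycles of `S`, again by compatibility.
-/

lemma Set.eq_singleton_of_ncard_eq_one {α : Type*} {s : Set α} {a : α} (hs : s.ncard = 1)
    (ha : a ∈ s) : s = {a} := by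
  obtain ⟨b, rfl⟩ := Set.ncard_eq_one.1 hs
  rw [Set.mem_singleton_iff.1 ha]

lemma Set.ncard_setOf_sum {α β : Type*} (p : α ⊕ β → Prop) [Finite α] [Finite β] :
    {x | p x}.ncard = {a | p (.inl a)}.ncard + {b | p (.inr b)}.ncard := by
  simp only [← Nat.card_coe_set_eq]
  exact (Nat.card_congr Equiv.subtypeSum).trans Nat.card_sum

lemma Set.ncard_setOf_subtype {α : Type*} (P Q : α → Prop) :
    {x : Subtype P | Q x}.ncard = {a | P a ∧ Q a}.ncard := by
  rw [← Set.ncard_image_of_injective _ Subtype.val_injective]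
  congr 1
  ext a
  simp [and_comm]

lemma clawGraph_adj_iff (a b : Fin 4) :
    clawGraph.Adj a b ↔ (a = 0 ∧ b ≠ 0) ∨ (b = 0 ∧ a ≠ 0) := by
  simp only [clawGraph, fromEdgeSet_adj, Set.mem_insert_iff, Set.mem_singleton_iff, Sym2.eq,
    Sym2.rel_iff', Prod.mk.injEq, Prod.swap_prod_mk]
  fin_cases a <;> fin_cases b <;> simp

namespace SimpleGraph

variable {V W : Type*} {M H : SimpleGraph V} {H' : SimpleGraph W}

lemma Iso.neighborSet_eq_image {K : M.ConnectedComponent} (φ : M.induce K.supp ≃g H')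
    {x : V} (hx : x ∈ K.supp) :
    M.neighborSet x = (fun a => (φ.symm a : V)) '' H'.neighborSet (φ ⟨x, hx⟩) := by
  ext y
  constructor
  · intro hxy
    exact ⟨φ ⟨y, K.mem_supp_of_adj_mem_supp hx hxy⟩, φ.map_adj_iff.2 hxy, by simp⟩
  · rintro ⟨a, ha, rfl⟩
    simpa using φ.symm.map_adj_iff.2 ha

namespace ConnectedComponent

lemma exists_center_of_iso {K : M.ConnectedComponent} (φ : M.induce K.supp ≃g H') (o : W)
    (hleaf : ∀ a, a ≠ o → H'.neighborSet a = {o}) :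
    ∃ z, (∀ x ∈ K.supp, x ≠ z → M.neighborSet x = {z}) ∧
      (M.neighborSet z).ncard = (H'.neighborSet o).ncard := by
  refine ⟨φ.symm o, fun x hx hxz => ?_, ?_⟩
  · have hxo : φ ⟨x, hx⟩ ≠ o := fun h => hxz (by simp [← h])
    rw [Iso.neighborSet_eq_image φ hx, hleaf _ hxo, Set.image_singleton]
  · rw [Iso.neighborSet_eq_image φ (φ.symm o).2, Subtype.coe_eta, φ.apply_symm_apply]
    exact Set.ncard_image_of_injective _ (Subtype.val_injective.comp φ.symm.injective)

def spanningGraph (K : H.ConnectedComponent) : SimpleGraph V where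
  Adj u v := H.Adj u v ∧ u ∈ K.supp
  symm := ⟨fun _ _ (h : H.Adj _ _ ∧ _ ∈ K.supp) =>
    ⟨h.1.symm, K.mem_supp_of_adj_mem_supp h.2 h.1⟩⟩
  loopless := ⟨fun v (h : H.Adj v v ∧ _) => H.loopless.irrefl v h.1⟩

variable (K : H.ConnectedComponent)

lemma spanningGraph_le : K.spanningGraph ≤ H := fun _ _ h => h.1

lemma mem_supp_of_mem_support_spanningGraph {v : V} (hv : v ∈ K.spanningGraph.support) :
    v ∈ K.supp :=
  ((mem_support _).1 hv).choose_spec.2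

lemma reachable_spanningGraph {u v : V} (hu : u ∈ K.supp) (w : H.Walk u v) :
    K.spanningGraph.Reachable u v := by
  induction w with
  | nil => rfl
  | cons huv _ ih =>
    exact (show K.spanningGraph.Adj _ _ from ⟨huv, hu⟩).reachable.trans
      (ih (K.mem_supp_of_adj_mem_supp hu huv))

lemma isComponentCycleOf_spanningGraph
    (hdeg : ∀ v, (H.neighborSet v).ncard = 0 ∨ (H.neighborSet v).ncard = 2)
    {a b : V} (hab : H.Adj a b) (ha : a ∈ K.supp) :
    IsComponentCycleOf H K.spanningGraph := by
  refine ⟨⟨K.spanningGraph_le, ⟨s(a, b), hab, ha⟩, fun v => ?_, fun u v hu hv => ?_⟩,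
    fun u v hu huv => ⟨huv, K.mem_supp_of_mem_support_spanningGraph hu⟩⟩
  · by_cases hv : v ∈ K.supp
    · have : K.spanningGraph.neighborSet v = H.neighborSet v := by
        ext w; exact ⟨fun h => h.1, fun h => ⟨h, hv⟩⟩
      rw [this]; exact hdeg v
    · have : K.spanningGraph.neighborSet v = ∅ :=
        Set.eq_empty_of_forall_notMem fun _ h => hv h.2
      simp [this]
  · have hu := K.mem_supp_of_mem_support_spanningGraph hu
    exact K.reachable_spanningGraph hu (K.reachable_of_mem_supp hu
      (K.mem_supp_of_mem_support_spanningGraph hv)).some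

end ConnectedComponent

end SimpleGraph

namespace IsComponentCycleOf

variable {V : Type*} {H C : SimpleGraph V}

lemma mem_support_of_walk (hC : IsComponentCycleOf H C) {a u : V} (w : H.Walk a u)
    (ha : a ∈ C.support) : u ∈ C.support := by
  induction w with
  | nil => exact ha
  | cons hab _ ih => exact ih ⟨_, (hC.2 _ _ ha hab).symm⟩

lemma eq_spanningGraph (hC : IsComponentCycleOf H C) {a : V} (ha : a ∈ C.support) :
    C = (H.connectedComponentMk a).spanningGraph := by
  ext u v
  constructor
  · intro huv
    refine ⟨hC.1.1 huv, ConnectedComponent.sound ?_⟩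
    exact (hC.1.2.2.2 u a ⟨v, huv⟩ ha).mono hC.1.1
  · rintro ⟨huv, hu⟩
    have hau : H.Reachable a u := (ConnectedComponent.exact hu).symm
    exact hC.2 u v (hC.mem_support_of_walk hau.some ha) huv

end IsComponentCycleOf

lemma IsCycleSubgraph.mono {V : Type*} {G H C : SimpleGraph V} (hC : IsCycleSubgraph H C)
    (hHG : H ≤ G) : IsCycleSubgraph G C :=
  ⟨hC.1.trans hHG, hC.2⟩

lemma ncard_setOf_isComponentCycleOf_mem_edgeSet {V : Type*} {H : SimpleGraph V}
    (hdeg : ∀ v, (H.neighborSet v).ncard = 0 ∨ (H.neighborSet v).ncard = 2)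
    {e : Sym2 V} (he : e ∈ H.edgeSet) :
    {C | IsComponentCycleOf H C ∧ e ∈ C.edgeSet}.ncard = 1 := by
  induction e using Sym2.ind with
  | _ a b =>
  refine Set.ncard_eq_one.2 ⟨(H.connectedComponentMk a).spanningGraph, Set.ext fun C => ?_⟩
  constructor
  · rintro ⟨hC, hab⟩
    exact hC.eq_spanningGraph ⟨b, hab⟩
  · rintro rfl
    exact ⟨ConnectedComponent.isComponentCycleOf_spanningGraph _ hdeg he rfl, he, rfl⟩

lemma exists_isCycleDoubleCover_of_finite {V ι : Type*} [Finite ι] {G : SimpleGraph V}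
    (F : ι → SimpleGraph V) (hF : ∀ i, IsCycleSubgraph G (F i))
    (hcover : ∀ e ∈ G.edgeSet, {i | e ∈ (F i).edgeSet}.ncard = 2) :
    ∃ (n : ℕ) (F' : Fin n → SimpleGraph V),
      IsCycleDoubleCover G F' ∧ ∀ i, ∃ k, F' k = F i := by
  obtain ⟨n, ⟨σ⟩⟩ := Finite.exists_equiv_fin ι
  refine ⟨n, F ∘ σ.symm, ⟨fun k => hF _, fun e he => ?_⟩, fun i => ⟨σ i, by simp⟩⟩
  rw [← hcover e he, ← Set.ncard_preimage_of_injective_subset_range σ.symm.injective (by simp)]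
  rfl

section PseudoMatching

variable {V : Type*} {G M : SimpleGraph V}

lemma IsPerfectPseudoMatching.exists_center (hM : IsPerfectPseudoMatching G M)
    (K : M.ConnectedComponent) :
    ∃ z, (∀ x ∈ K.supp, x ≠ z → M.neighborSet x = {z}) ∧
      ((M.neighborSet z).ncard = 1 ∨ (M.neighborSet z).ncard = 3) := by
  rcases hM.2 K with ⟨⟨φ⟩⟩ | ⟨⟨φ⟩⟩
  · obtain ⟨z, hleaf, hz⟩ := K.exists_center_of_iso φ 0 (by
      intro a ha; ext b; fin_cases a <;> fin_cases b <;> simp_all)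
    refine ⟨z, hleaf, Or.inl ?_⟩
    rw [hz, show (⊤ : SimpleGraph (Fin 2)).neighborSet 0 = {1} by ext b; fin_cases b <;> simp]
    exact Set.ncard_singleton 1
  · obtain ⟨z, hleaf, hz⟩ := K.exists_center_of_iso φ 0 (by
      intro a ha; ext b; simp [clawGraph_adj_iff, ha])
    refine ⟨z, hleaf, Or.inr ?_⟩
    rw [hz, show clawGraph.neighborSet 0 = {1, 2, 3} by
      ext b; simp [clawGraph_adj_iff]; omega]
    rw [Set.ncard_insert_of_notMem (by simp), Set.ncard_pair (by simp)]

lemma IsPerfectPseudoMatching.ncard_neighborSet (hM : IsPerfectPseudoMatching G M) (v : V) :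
    (M.neighborSet v).ncard = 1 ∨ (M.neighborSet v).ncard = 3 := by
  obtain ⟨z, hleaf, hz⟩ := hM.exists_center (M.connectedComponentMk v)
  by_cases hvz : v = z
  · exact hvz ▸ hz
  · simp [hleaf v rfl hvz]

lemma IsPerfectPseudoMatching.exists_eq_mk_neighborSet_eq_singleton
    (hM : IsPerfectPseudoMatching G M) {e : Sym2 V} (he : e ∈ M.edgeSet) :
    ∃ x m, e = s(x, m) ∧ M.neighborSet x = {m} := by
  induction e using Sym2.ind with
  | _ u v =>
  obtain ⟨z, hleaf, -⟩ := hM.exists_center (M.connectedComponentMk u)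
  have hv : v ∈ (M.connectedComponentMk u).supp :=
    ConnectedComponent.connectedComponentMk_eq_of_adj he.symm
  by_cases huz : u = z
  · subst huz
    exact ⟨v, u, Sym2.eq_swap, hleaf v hv he.ne.symm⟩
  · have hv' : v = z := by simpa [hleaf u rfl huz] using show v ∈ M.neighborSet u from he
    exact ⟨u, v, rfl, hv' ▸ hleaf u rfl huz⟩

/-- In a star, a leaf sees only the centre, and the centre sees every other leaf. -/
lemma IsPerfectPseudoMatching.adj_of_neighborSet_eq_singleton (hM : IsPerfectPseudoMatching G M)
    {a b v : V} (hab : a ≠ b) (hK : M.connectedComponentMk a = M.connectedComponentMk b)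
    (ha : M.neighborSet a = {v}) (hvb : v ≠ b) : M.Adj v b := by
  obtain ⟨z, hleaf, -⟩ := hM.exists_center (M.connectedComponentMk a)
  have hb : b ∈ (M.connectedComponentMk a).supp := hK.symm
  by_cases haz : a = z
  · subst haz
    have hba : a ∈ M.neighborSet b := by simp [hleaf b hb hab.symm]
    exact absurd (by simpa [ha] using show b ∈ M.neighborSet a from hba.symm) hvb.symm
  · obtain rfl : v = z := by simpa [ha] using hleaf a rfl haz
    exact (show v ∈ M.neighborSet b by simp [hleaf b hb hvb.symm]).symm

end PseudoMatching

section Cubic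

variable {V : Type*} {G M : SimpleGraph V}

lemma IsCubic.finite_neighborSet (hG : IsCubic G) (v : V) : (G.neighborSet v).Finite :=
  Set.finite_of_ncard_ne_zero (by rw [hG v]; decide)

lemma IsCubic.ncard_sdiff_neighborSet (hG : IsCubic G) (hMG : M ≤ G) (v : V) :
    ((G \ M).neighborSet v).ncard = 3 - (M.neighborSet v).ncard := by
  have hsub : M.neighborSet v ⊆ G.neighborSet v := fun _ h => hMG h
  have : (G \ M).neighborSet v = G.neighborSet v \ M.neighborSet v := by ext; simp
  rw [this, Set.ncard_sdiff hsub ((hG.finite_neighborSet v).subset hsub), hG v]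

lemma IsCubic.ncard_sdiff_neighborSet_eq_zero_or_two (hG : IsCubic G)
    (hM : IsPerfectPseudoMatching G M) (v : V) :
    ((G \ M).neighborSet v).ncard = 0 ∨ ((G \ M).neighborSet v).ncard = 2 := by
  rw [hG.ncard_sdiff_neighborSet hM.1]
  rcases hM.ncard_neighborSet v with h | h <;> simp [h]

lemma IsCubic.ncard_neighborSet_eq_one_of_sdiff_adj (hG : IsCubic G)
    (hM : IsPerfectPseudoMatching G M) {x y : V} (hxy : (G \ M).Adj x y) :
    (M.neighborSet x).ncard = 1 := by
  have hfin : ((G \ M).neighborSet x).Finite :=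
    (hG.finite_neighborSet x).subset fun _ h => h.1
  have hpos := Set.ncard_ne_zero_of_mem (show y ∈ (G \ M).neighborSet x from hxy) hfin
  rw [hG.ncard_sdiff_neighborSet hM.1] at hpos
  rcases hM.ncard_neighborSet x with h | h
  · exact h
  · simp [h] at hpos

lemma IsCubic.exists_sdiff_neighborSet_eq_pair (hG : IsCubic G) (hMG : M ≤ G) {x : V}
    (hx : (M.neighborSet x).ncard = 1) : ∃ p q, p ≠ q ∧ (G \ M).neighborSet x = {p, q} := by
  rw [← Set.ncard_eq_two, hG.ncard_sdiff_neighborSet hMG, hx]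

end Cubic

namespace ContractedCycle

variable {V : Type*} {G M : SimpleGraph V} (c : ContractedCycle G M)

def next (i : Fin c.n) : Fin c.n := i + ⟨1 % c.n, Nat.mod_lt _ c.hn⟩

def prev (i : Fin c.n) : Fin c.n := i - ⟨1 % c.n, Nat.mod_lt _ c.hn⟩

lemma next_prev (i : Fin c.n) : c.next (c.prev i) = i :=
  have : NeZero c.n := ⟨c.hn.ne'⟩
  sub_add_cancel _ _

lemma prev_next (i : Fin c.n) : c.prev (c.next i) = i :=
  have : NeZero c.n := ⟨c.hn.ne'⟩
  add_sub_cancel_right _ _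

lemma val_next {i : Fin c.n} (hi : i.val + 1 < c.n) : (c.next i).val = i.val + 1 := by
  rw [next, Fin.val_add, Nat.add_mod_mod, Nat.mod_eq_of_lt hi]

noncomputable def src (i : Fin c.n) : V := (c.ends i).choose

noncomputable def tgt (i : Fin c.n) : V := (c.ends i).choose_spec.choose

lemma edge_eq (i : Fin c.n) : c.edge i = s(c.src i, c.tgt i) :=
  (c.ends i).choose_spec.choose_spec.1

lemma mk_src (i : Fin c.n) : M.connectedComponentMk (c.src i) = c.vtx i :=
  (c.ends i).choose_spec.choose_spec.2.1

lemma mk_tgt (i : Fin c.n) : M.connectedComponentMk (c.tgt i) = c.vtx (c.next i) :=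
  (c.ends i).choose_spec.choose_spec.2.2

lemma mk_tgt_prev (j : Fin c.n) : M.connectedComponentMk (c.tgt (c.prev j)) = c.vtx j := by
  rw [mk_tgt, next_prev]

lemma sdiff_adj_of_edge_eq {i : Fin c.n} {x y : V} (h : c.edge i = s(x, y)) :
    (G \ M).Adj x y := by
  have := c.mem i
  rw [h] at this
  exact ⟨this.1, this.2⟩

def verts : Set V := {x | ∃ i, x ∈ c.edge i}

lemma src_mem_verts (i : Fin c.n) : c.src i ∈ c.verts := ⟨i, by simp [edge_eq]⟩

lemma tgt_mem_verts (i : Fin c.n) : c.tgt i ∈ c.verts := ⟨i, by simp [edge_eq]⟩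

lemma exists_sdiff_adj_of_mem_verts {x : V} (hx : x ∈ c.verts) : ∃ y, (G \ M).Adj x y := by
  obtain ⟨i, hi⟩ := hx
  obtain ⟨y, hy⟩ := Sym2.mem_iff_exists.1 hi
  exact ⟨y, c.sdiff_adj_of_edge_eq hy⟩

lemma exists_mk_eq_vtx {x : V} (hx : x ∈ c.verts) :
    ∃ j, M.connectedComponentMk x = c.vtx j := by
  obtain ⟨i, hi⟩ := hx
  rw [edge_eq, Sym2.mem_iff] at hi
  rcases hi with rfl | rfl
  · exact ⟨i, c.mk_src i⟩
  · exact ⟨c.next i, c.mk_tgt i⟩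

lemma mem_verts_iff_of_mk_eq {x : V} {j : Fin c.n} (hx : M.connectedComponentMk x = c.vtx j) :
    x ∈ c.verts ↔ x = c.src j ∨ x = c.tgt (c.prev j) := by
  constructor
  · rintro ⟨i, hi⟩
    rw [edge_eq, Sym2.mem_iff] at hi
    rcases hi with rfl | rfl
    · exact Or.inl (congrArg c.src (c.vtx_inj ((c.mk_src i).symm.trans hx)))
    · obtain rfl : c.next i = j := c.vtx_inj ((c.mk_tgt i).symm.trans hx)
      rw [c.prev_next]
      exact Or.inr rfl
  · rintro (rfl | rfl)
    exacts [c.src_mem_verts j, c.tgt_mem_verts _]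

lemma mem_verts_iff_of_sdiff_neighborSet_eq_pair {x p q : V}
    (hx : (G \ M).neighborSet x = {p, q}) :
    x ∈ c.verts ↔ s(x, p) ∈ c.edges ∨ s(x, q) ∈ c.edges := by
  constructor
  · rintro ⟨i, hi⟩
    obtain ⟨y, hy⟩ := Sym2.mem_iff_exists.1 hi
    have : y ∈ (G \ M).neighborSet x := c.sdiff_adj_of_edge_eq hy
    rw [hx] at this
    rcases this with rfl | rfl
    exacts [Or.inl ⟨i, hy⟩, Or.inr ⟨i, hy⟩]
  · rintro (⟨i, hi⟩ | ⟨i, hi⟩) <;> exact ⟨i, by simp [hi]⟩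

/-- Compatibility of a single cycle with `T_M`. -/
def IsCompatible : Prop := ∀ i j (x : V), x ∈ c.edge i → x ∈ c.edge j → i = j

lemma src_ne_tgt (hc : c.IsCompatible) (i j : Fin c.n) : c.src i ≠ c.tgt j := by
  intro h
  have hij : i = j := hc i j (c.src i) (by simp [edge_eq]) (by rw [h]; simp [edge_eq])
  subst hij
  exact (c.sdiff_adj_of_edge_eq (c.edge_eq i)).ne h

/-- Inside a star of `M`, the `M`-edges at the two leaves where `c` enters and leaves form the
path joining them. -/
def lift : SimpleGraph V where
  Adj u v := s(u, v) ∈ c.edges ∨ (M.Adj u v ∧ (u ∈ c.verts ∨ v ∈ c.verts))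
  symm := ⟨fun u v
    (h : s(u, v) ∈ c.edges ∨ M.Adj u v ∧ (u ∈ c.verts ∨ v ∈ c.verts)) => by
    rw [Sym2.eq_swap]
    exact h.imp_right fun h => ⟨h.1.symm, h.2.symm⟩⟩
  loopless := ⟨fun v (h : s(v, v) ∈ c.edges ∨ (M.Adj v v ∧ _)) => by
    rcases h with ⟨i, hi⟩ | ⟨h, -⟩
    · exact (c.sdiff_adj_of_edge_eq hi).ne rfl
    · exact M.loopless.irrefl v h⟩

lemma lift_le (hMG : M ≤ G) : c.lift ≤ G := by
  rintro u v (⟨i, hi⟩ | ⟨h, -⟩)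
  · exact (c.sdiff_adj_of_edge_eq hi).1
  · exact hMG h

lemma mem_edgeSet_lift {e : Sym2 V} :
    e ∈ c.lift.edgeSet ↔ e ∈ c.edges ∨ e ∈ M.edgeSet ∧ ∃ x ∈ e, x ∈ c.verts := by
  induction e using Sym2.ind with
  | _ u v => simp [lift]

variable {c}

lemma neighborSet_eq_singleton_of_mem_verts (hG : IsCubic G) (hM : IsPerfectPseudoMatching G M)
    {x m : V} (hx : x ∈ c.verts) (hxm : M.Adj x m) : M.neighborSet x = {m} :=
  have ⟨_, hxy⟩ := c.exists_sdiff_adj_of_mem_verts hx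
  Set.eq_singleton_of_ncard_eq_one (hG.ncard_neighborSet_eq_one_of_sdiff_adj hM hxy) hxm

lemma adj_src_and_adj_tgt_prev (hG : IsCubic G) (hM : IsPerfectPseudoMatching G M)
    (hc : c.IsCompatible) {j : Fin c.n} {u v : V} (hu : u ∈ c.verts)
    (hj : M.connectedComponentMk u = c.vtx j) (hvu : M.Adj v u) (hva : v ≠ c.src j)
    (hvb : v ≠ c.tgt (c.prev j)) : M.Adj v (c.src j) ∧ M.Adj v (c.tgt (c.prev j)) := by
  have hK := (c.mk_src j).trans (c.mk_tgt_prev j).symm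
  have hab := c.src_ne_tgt hc j (c.prev j)
  have hu' := neighborSet_eq_singleton_of_mem_verts hG hM hu hvu.symm
  rcases (c.mem_verts_iff_of_mk_eq hj).1 hu with rfl | rfl
  · exact ⟨hvu, hM.adj_of_neighborSet_eq_singleton hab hK hu' hvb⟩
  · exact ⟨hM.adj_of_neighborSet_eq_singleton hab.symm hK.symm hu' hva, hvu⟩

lemma ncard_neighborSet_lift_of_mem_verts (hG : IsCubic G) (hM : IsPerfectPseudoMatching G M)
    (hc : c.IsCompatible) {t : V} (ht : t ∈ c.verts) : (c.lift.neighborSet t).ncard = 2 := by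
  obtain ⟨i, hti⟩ := id ht
  obtain ⟨o, hio⟩ := Sym2.mem_iff_exists.1 hti
  have hto := c.sdiff_adj_of_edge_eq hio
  obtain ⟨m, hm⟩ := Set.ncard_eq_one.1 (hG.ncard_neighborSet_eq_one_of_sdiff_adj hM hto)
  have hnbr : c.lift.neighborSet t = {o, m} := by
    ext w
    simp only [mem_neighborSet, lift, Set.mem_insert_iff, Set.mem_singleton_iff]
    constructor
    · rintro (⟨k, hk⟩ | ⟨htw, -⟩)
      · obtain rfl : k = i := hc k i t (by simp [hk]) hti
        exact Or.inl (Sym2.congr_right.1 (hk.symm.trans hio))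
      · exact Or.inr (by simpa [hm] using show w ∈ M.neighborSet t from htw)
    · rintro (rfl | rfl)
      · exact Or.inl ⟨i, hio⟩
      · exact Or.inr ⟨show w ∈ M.neighborSet t by simp [hm], Or.inl ht⟩
  rw [hnbr, Set.ncard_pair]
  rintro rfl
  exact hto.2 (show o ∈ M.neighborSet t by simp [hm])

lemma neighborSet_lift_of_notMem_verts {v : V} (hv : v ∉ c.verts) :
    c.lift.neighborSet v = {w | M.Adj v w ∧ w ∈ c.verts} := by
  ext w
  simp only [mem_neighborSet, lift, Set.mem_ofPred_eq]
  constructor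
  · rintro (⟨k, hk⟩ | ⟨hvw, hv' | hw⟩)
    exacts [absurd ⟨k, by simp [hk]⟩ hv, absurd hv' hv, ⟨hvw, hw⟩]
  · exact fun ⟨hvw, hw⟩ => Or.inr ⟨hvw, Or.inr hw⟩

lemma ncard_neighborSet_lift_of_notMem_verts (hG : IsCubic G)
    (hM : IsPerfectPseudoMatching G M) (hc : c.IsCompatible) {v : V} (hv : v ∉ c.verts) :
    (c.lift.neighborSet v).ncard = 0 ∨ (c.lift.neighborSet v).ncard = 2 := by
  rw [neighborSet_lift_of_notMem_verts hv]
  by_cases hex : ∃ u, M.Adj v u ∧ u ∈ c.verts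
  · obtain ⟨u, hvu, hu⟩ := hex
    obtain ⟨j, hj⟩ := c.exists_mk_eq_vtx hu
    have hvj : M.connectedComponentMk v = c.vtx j :=
      (ConnectedComponent.connectedComponentMk_eq_of_adj hvu).trans hj
    have hva : v ≠ c.src j := fun h => hv (h ▸ c.src_mem_verts j)
    have hvb : v ≠ c.tgt (c.prev j) := fun h => hv (h ▸ c.tgt_mem_verts _)
    have hboth := adj_src_and_adj_tgt_prev hG hM hc hu hj hvu hva hvb
    right
    convert Set.ncard_pair (c.src_ne_tgt hc j (c.prev j)) using 2
    ext w
    simp only [Set.mem_ofPred_eq, Set.mem_insert_iff, Set.mem_singleton_iff]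
    constructor
    · rintro ⟨hvw, hw⟩
      exact (c.mem_verts_iff_of_mk_eq
        ((ConnectedComponent.connectedComponentMk_eq_of_adj hvw).symm.trans hvj)).1 hw
    · rintro (rfl | rfl)
      exacts [⟨hboth.1, c.src_mem_verts j⟩, ⟨hboth.2, c.tgt_mem_verts _⟩]
  · left
    convert Set.ncard_empty V
    exact Set.eq_empty_of_forall_notMem fun w hw => hex ⟨w, hw⟩

lemma reachable_tgt_prev_src (hG : IsCubic G) (hM : IsPerfectPseudoMatching G M)
    (hc : c.IsCompatible) (j : Fin c.n) : c.lift.Reachable (c.tgt (c.prev j)) (c.src j) := by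
  have hb := c.tgt_mem_verts (c.prev j)
  obtain ⟨m, hm⟩ := Set.ncard_eq_one.1 (hG.ncard_neighborSet_eq_one_of_sdiff_adj hM
    (c.sdiff_adj_of_edge_eq (c.edge_eq (c.prev j))).symm)
  have hbm : M.Adj (c.tgt (c.prev j)) m := show m ∈ M.neighborSet _ by simp [hm]
  have hbm' : c.lift.Adj (c.tgt (c.prev j)) m := Or.inr ⟨hbm, Or.inl hb⟩
  by_cases hma : m = c.src j
  · exact hma ▸ hbm'.reachable
  · have hma' : M.Adj m (c.src j) := hM.adj_of_neighborSet_eq_singleton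
      (c.src_ne_tgt hc j _).symm ((c.mk_tgt_prev j).trans (c.mk_src j).symm) hm hma
    exact hbm'.reachable.trans (Adj.reachable (Or.inr ⟨hma', Or.inr (c.src_mem_verts j)⟩))

lemma reachable_src_next (hG : IsCubic G) (hM : IsPerfectPseudoMatching G M)
    (hc : c.IsCompatible) (i : Fin c.n) : c.lift.Reachable (c.src i) (c.src (c.next i)) := by
  have hedge : c.lift.Adj (c.src i) (c.tgt i) := Or.inl ⟨i, c.edge_eq i⟩
  have := reachable_tgt_prev_src hG hM hc (c.next i)
  rw [c.prev_next] at this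
  exact hedge.reachable.trans this

lemma reachable_src_zero_src (hG : IsCubic G) (hM : IsPerfectPseudoMatching G M)
    (hc : c.IsCompatible) (j : Fin c.n) : c.lift.Reachable (c.src ⟨0, c.hn⟩) (c.src j) := by
  obtain ⟨k, hk⟩ := j
  induction k with
  | zero => rfl
  | succ k ih =>
    have hnext : c.next ⟨k, by omega⟩ = ⟨k + 1, hk⟩ := Fin.ext (c.val_next hk)
    exact (ih (by omega)).trans (hnext ▸ reachable_src_next hG hM hc _)

lemma reachable_src_zero_of_mem_verts (hG : IsCubic G) (hM : IsPerfectPseudoMatching G M)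
    (hc : c.IsCompatible) {x : V} (hx : x ∈ c.verts) :
    c.lift.Reachable x (c.src ⟨0, c.hn⟩) := by
  obtain ⟨i, hi⟩ := hx
  refine Reachable.trans ?_ (reachable_src_zero_src hG hM hc i).symm
  rw [edge_eq, Sym2.mem_iff] at hi
  rcases hi with rfl | rfl
  · rfl
  · exact Adj.reachable (Or.inl ⟨i, by rw [edge_eq, Sym2.eq_swap]⟩)

lemma isCycleSubgraph_lift (hG : IsCubic G) (hM : IsPerfectPseudoMatching G M)
    (hc : c.IsCompatible) : IsCycleSubgraph G c.lift := by
  refine ⟨c.lift_le hM.1, ⟨c.edge ⟨0, c.hn⟩, ?_⟩, fun v => ?_, ?_⟩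
  · rw [mem_edgeSet_lift]
    exact Or.inl ⟨_, rfl⟩
  · by_cases hv : v ∈ c.verts
    · exact Or.inr (ncard_neighborSet_lift_of_mem_verts hG hM hc hv)
    · exact ncard_neighborSet_lift_of_notMem_verts hG hM hc hv
  · suffices h : ∀ v ∈ c.lift.support, c.lift.Reachable v (c.src ⟨0, c.hn⟩) from
      fun u v hu hv => (h u hu).trans (h v hv).symm
    intro v hv
    obtain ⟨w, hvw⟩ := (mem_support _).1 hv
    by_cases hv : v ∈ c.verts
    · exact reachable_src_zero_of_mem_verts hG hM hc hv
    · rw [← mem_neighborSet, neighborSet_lift_of_notMem_verts hv] at hvw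
      exact Adj.reachable (Or.inr ⟨hvw.1, Or.inr hvw.2⟩) |>.trans
        (reachable_src_zero_of_mem_verts hG hM hc hvw.2)

lemma mem_verts_of_neighborSet_eq_singleton (hG : IsCubic G) (hM : IsPerfectPseudoMatching G M)
    (hc : c.IsCompatible) {x m : V} (hx : M.neighborSet x = {m}) (hm : m ∈ c.verts) :
    x ∈ c.verts := by
  have hxm : M.Adj x m := show m ∈ M.neighborSet x by simp [hx]
  obtain ⟨j, hj⟩ := c.exists_mk_eq_vtx hm
  have hxj := (ConnectedComponent.connectedComponentMk_eq_of_adj hxm).trans hj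
  by_contra hxv
  rw [c.mem_verts_iff_of_mk_eq hxj, not_or] at hxv
  have hboth := adj_src_and_adj_tgt_prev hG hM hc hm hj hxm hxv.1 hxv.2
  have ha : c.src j = m := by simpa [hx] using show _ ∈ M.neighborSet x from hboth.1
  have hb : c.tgt (c.prev j) = m := by simpa [hx] using show _ ∈ M.neighborSet x from hboth.2
  exact c.src_ne_tgt hc j _ (ha.trans hb.symm)

end ContractedCycle

namespace IsCompatibleCycleDecomposition

variable {V : Type*} {G M : SimpleGraph V} {D : Set (ContractedCycle G M)}

lemma isCompatible (hD : IsCompatibleCycleDecomposition G M D) {c : ContractedCycle G M}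
    (hc : c ∈ D) : c.IsCompatible := by
  intro i j x hi hj
  by_contra hij
  exact hD.2.2 c hc _ ⟨i, rfl⟩ _ ⟨j, rfl⟩ (c.edge_inj.ne hij) ⟨x, hi, hj⟩

lemma eq_of_mem_edges (hD : IsCompatibleCycleDecomposition G M D) {c c' : ContractedCycle G M}
    (hc : c ∈ D) (hc' : c' ∈ D) {e : Sym2 V} (he : e ∈ c.edges) (he' : e ∈ c'.edges) :
    c = c' := by
  by_contra hne
  exact Set.disjoint_left.1 (hD.2.1 c hc c' hc' hne) he he'

lemma finite [Finite V] (hD : IsCompatibleCycleDecomposition G M D) : D.Finite := by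
  refine Set.Finite.of_finite_image (Set.toFinite (ContractedCycle.edges '' D)) ?_
  intro c hc c' hc' h
  exact hD.eq_of_mem_edges hc hc' ⟨⟨0, c.hn⟩, rfl⟩ (h ▸ ⟨⟨0, c.hn⟩, rfl⟩)

lemma ncard_setOf_mem_edgeSet_lift_of_notMem (hD : IsCompatibleCycleDecomposition G M D)
    {e : Sym2 V} (he : e ∈ G.edgeSet \ M.edgeSet) :
    {c | c ∈ D ∧ e ∈ c.lift.edgeSet}.ncard = 1 := by
  obtain ⟨c₀, hc₀, hec₀⟩ := hD.1 e he
  refine Set.ncard_eq_one.2 ⟨c₀, Set.ext fun c => ?_⟩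
  simp only [Set.mem_ofPred_eq, Set.mem_singleton_iff, ContractedCycle.mem_edgeSet_lift,
    he.2, false_and, or_false]
  exact ⟨fun ⟨hc, hec⟩ => hD.eq_of_mem_edges hc hc₀ hec hec₀,
    fun h => h ▸ ⟨hc₀, hec₀⟩⟩

lemma ncard_setOf_mem_edgeSet_lift_of_mem (hG : IsCubic G) (hM : IsPerfectPseudoMatching G M)
    (hD : IsCompatibleCycleDecomposition G M D) {e : Sym2 V} (he : e ∈ M.edgeSet) :
    {c | c ∈ D ∧ e ∈ c.lift.edgeSet}.ncard = 2 := by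
  obtain ⟨x, m, rfl, hx'⟩ := hM.exists_eq_mk_neighborSet_eq_singleton he
  obtain ⟨p, q, hpq, hpq'⟩ :=
    hG.exists_sdiff_neighborSet_eq_pair hM.1 (Set.ncard_eq_one.2 ⟨m, hx'⟩)
  have hmem : ∀ y ∈ (G \ M).neighborSet x, s(x, y) ∈ G.edgeSet \ M.edgeSet :=
    fun y hy => by rw [← edgeSet_sdiff]; exact hy
  obtain ⟨c₁, hc₁, hp⟩ := hD.1 _ (hmem p (by simp [hpq']))
  obtain ⟨c₂, hc₂, hq⟩ := hD.1 _ (hmem q (by simp [hpq']))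
  refine Set.ncard_eq_two.2 ⟨c₁, c₂, ?_, Set.ext fun c => ?_⟩
  · rintro rfl
    obtain ⟨i, hi⟩ := hp
    obtain ⟨j, hj⟩ := hq
    obtain rfl := hD.isCompatible hc₁ i j x (by simp [hi]) (by simp [hj])
    exact hpq (Sym2.congr_right.1 (hi.symm.trans hj))
  simp only [Set.mem_ofPred_eq, Set.mem_insert_iff, Set.mem_singleton_iff,
    ContractedCycle.mem_edgeSet_lift, he, true_and, Sym2.mem_iff, exists_eq_or_imp,
    exists_eq_left]
  have hverts (c : ContractedCycle G M) := c.mem_verts_iff_of_sdiff_neighborSet_eq_pair hpq'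
  constructor
  · rintro ⟨hc, hxv⟩
    replace hxv : x ∈ c.verts := by
      rcases hxv with ⟨i, hi⟩ | hxv | hmv
      exacts [absurd he (hi ▸ (c.mem i).2), hxv,
        c.mem_verts_of_neighborSet_eq_singleton hG hM (hD.isCompatible hc) hx' hmv]
    rcases (hverts c).1 hxv with h | h
    exacts [Or.inl (hD.eq_of_mem_edges hc hc₁ h hp), Or.inr (hD.eq_of_mem_edges hc hc₂ h hq)]
  · rintro (rfl | rfl)
    exacts [⟨hc₁, Or.inr (Or.inl ((hverts _).2 (Or.inl hp)))⟩,
      ⟨hc₂, Or.inr (Or.inl ((hverts _).2 (Or.inr hq)))⟩]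

lemma ncard_componentCycles_add_ncard_lifts (hG : IsCubic G) (hM : IsPerfectPseudoMatching G M)
    (hD : IsCompatibleCycleDecomposition G M D) {e : Sym2 V} (he : e ∈ G.edgeSet) :
    {C | IsComponentCycleOf (G \ M) C ∧ e ∈ C.edgeSet}.ncard +
      {c | c ∈ D ∧ e ∈ c.lift.edgeSet}.ncard = 2 := by
  by_cases heM : e ∈ M.edgeSet
  · have hnone : {C | IsComponentCycleOf (G \ M) C ∧ e ∈ C.edgeSet} = ∅ :=
      Set.eq_empty_of_forall_notMem fun C ⟨hC, heC⟩ =>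
        (edgeSet_sdiff G M ▸ edgeSet_mono hC.1.1 heC).2 heM
    rw [hnone, Set.ncard_empty, hD.ncard_setOf_mem_edgeSet_lift_of_mem hG hM heM]
  · have he' : e ∈ G.edgeSet \ M.edgeSet := ⟨he, heM⟩
    rw [ncard_setOf_isComponentCycleOf_mem_edgeSet (hG.ncard_sdiff_neighborSet_eq_zero_or_two hM)
      (edgeSet_sdiff G M ▸ he'), hD.ncard_setOf_mem_edgeSet_lift_of_notMem he']

end IsCompatibleCycleDecomposition

/-- If for a cubic graph `G` with perfect pseudo-matching `M` the contracted
multigraph `G/M` has a cycle decomposition compatible with the transition system `T_M` induced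
by the cycles of `G \ E(M)`, then `G` has a cycle double cover containing all cycles of
`G \ E(M)`. -/
theorem cdc_of_compatible_cycle_decomposition
    {V : Type*} [Fintype V] (G M : SimpleGraph V)
    (hG : IsCubic G) (hM : IsPerfectPseudoMatching G M)
    (D : Set (ContractedCycle G M)) (hD : IsCompatibleCycleDecomposition G M D) :
    ∃ (n : ℕ) (F : Fin n → SimpleGraph V), IsCycleDoubleCover G F ∧
      ∀ C : SimpleGraph V, IsComponentCycleOf (G \ M) C → ∃ i, F i = C := by
  have := hD.finite.to_subtype
  let F : {C // IsComponentCycleOf (G \ M) C} ⊕ D → SimpleGraph V :=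
    Sum.elim Subtype.val fun c => c.1.lift
  have hF : ∀ i, IsCycleSubgraph G (F i) := by
    rintro (⟨C, hC⟩ | ⟨c, hc⟩)
    · exact hC.1.mono sdiff_le
    · exact c.isCycleSubgraph_lift hG hM (hD.isCompatible hc)
  have hcover : ∀ e ∈ G.edgeSet, {i | e ∈ (F i).edgeSet}.ncard = 2 := by
    intro e he
    simp only [Set.ncard_setOf_sum, F, Sum.elim_inl, Sum.elim_inr]
    rw [Set.ncard_setOf_subtype _ fun C : SimpleGraph V => e ∈ C.edgeSet,
      Set.ncard_setOf_subtype _ fun c : ContractedCycle G M => e ∈ c.lift.edgeSet]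
    exact hD.ncard_componentCycles_add_ncard_lifts hG hM he
  obtain ⟨n, F', hF', hF'F⟩ := exists_isCycleDoubleCover_of_finite F hF hcover
  exact ⟨n, F', hF', fun C hC => hF'F (.inl ⟨C, hC⟩)⟩
end

section
/- The first Blanuša block B_0 (an 8-vertex cubic graph fragment with four half-edges a, b, b', a') has exactly two types of proper 3-edge-colorings: either all four half-edges a, a', b, b' receive the same color, or a and a' receive one common color while b and b' receive a second common color different from that of a and a'. -/
open SimpleGraph Classical

/-- The first Blanuša block `B₀`, with vertices `u₀,…,u₇ = 0,…,7` and pendant vertices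
`a = 8`, `b = 9`, `b' = 10`, `a' = 11` (the pendant edges model the four half-edges). -/
def blanusaB0 : SimpleGraph (Fin 12) :=
  SimpleGraph.fromEdgeSet
    {s((8 : Fin 12), 0), s((9 : Fin 12), 5), s((10 : Fin 12), 2), s((11 : Fin 12), 7),
     s((0 : Fin 12), 1), s((1 : Fin 12), 2), s((5 : Fin 12), 6), s((6 : Fin 12), 7),
     s((3 : Fin 12), 4), s((0 : Fin 12), 3), s((3 : Fin 12), 5), s((1 : Fin 12), 6),
     s((2 : Fin 12), 4), s((4 : Fin 12), 7)}

/-- The graph `G*` obtained from `G` by deleting the crossing edges `x x'''` and `x' x''`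
and inserting a Blanuša block `B₀` (on the new vertices `Sum.inr 0, …, Sum.inr 7`), joining
`x` to `u₀` (half-edge `a`), `x'''` to `u₇` (half-edge `a'`), `x'` to `u₂` (half-edge `b'`)
and `x''` to `u₅` (half-edge `b`). -/
def blanusaInsert {V : Type*} (G : SimpleGraph V) (x x' x'' x''' : V) :
    SimpleGraph (V ⊕ Fin 8) :=
  SimpleGraph.fromEdgeSet (
    (Sym2.map Sum.inl '' (G.edgeSet \ {s(x, x'''), s(x', x'')})) ∪
    {s(Sum.inl x, Sum.inr 0), s(Sum.inl x''', Sum.inr 7),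
     s(Sum.inl x', Sum.inr 2), s(Sum.inl x'', Sum.inr 5),
     s(Sum.inr (0 : Fin 8), Sum.inr 1), s(Sum.inr (1 : Fin 8), Sum.inr 2),
     s(Sum.inr (5 : Fin 8), Sum.inr 6), s(Sum.inr (6 : Fin 8), Sum.inr 7),
     s(Sum.inr (3 : Fin 8), Sum.inr 4), s(Sum.inr (0 : Fin 8), Sum.inr 3),
     s(Sum.inr (3 : Fin 8), Sum.inr 5), s(Sum.inr (1 : Fin 8), Sum.inr 6),
     s(Sum.inr (2 : Fin 8), Sum.inr 4), s(Sum.inr (4 : Fin 8), Sum.inr 7)})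

/-!
Each middle edge `u₁u₆`, `u₃u₄` of `B₀` sees the same two colours on the other edges at its
two ends. If these pairs were matched crosswise at `u₁u₆` (`u₀u₁ ∼ u₅u₆`, `u₁u₂ ∼ u₆u₇`), the
colour of `u₀u₁` would be missing from `u₀u₃` and `u₃u₅`, hence be that of `u₃u₄`, and so
would the colour of `u₁u₂`, by the same argument at `u₄`; but `u₀u₁` and `u₁u₂` meet. Crossing
at `u₃u₄` fails in the same way at `u₁` and `u₆`. So the block is coloured symmetrically under
`uᵢ ↦ u₇₋ᵢ`, and `a, a'` (resp. `b, b'`) are the third colour at two vertices that see the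
same pair of colours.
-/

def Rainbow {α : Type*} (x y z : α) : Prop :=
  x ≠ y ∧ x ≠ z ∧ y ≠ z

instance {α : Type*} [DecidableEq α] (x y z : α) : Decidable (Rainbow x y z) :=
  inferInstanceAs (Decidable (_ ∧ _ ∧ _))

theorem Rainbow.eq_of_ne_of_ne {x y z w : Fin 3} (h : Rainbow x y z) (hx : w ≠ x)
    (hy : w ≠ y) : w = z := by
  revert x y z w
  decide

theorem Rainbow.eq_and_eq_or_eq_and_eq {x y x' y' z : Fin 3} (h : Rainbow x y z)
    (h' : Rainbow x' y' z) : (x = x' ∧ y = y') ∨ (x = y' ∧ y = x') := by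
  revert x y x' y' z
  decide

section EdgeColoring

variable {V : Type*} {G : SimpleGraph V} {c : Sym2 V → Fin 3}

theorem IsProper3EdgeColoring.rainbow (hc : IsProper3EdgeColoring G c) (u : V)
    {e f g : Sym2 V}
    (h : (e ∈ G.edgeSet ∧ f ∈ G.edgeSet ∧ g ∈ G.edgeSet) ∧ (u ∈ e ∧ u ∈ f ∧ u ∈ g) ∧
      Rainbow e f g := by decide) :
    Rainbow (c e) (c f) (c g) := by
  obtain ⟨⟨he, hf, hg⟩, ⟨hue, huf, hug⟩, hef, heg, hfg⟩ := h
  exact ⟨hc e he f hf hef ⟨u, hue, huf⟩, hc e he g hg heg ⟨u, hue, hug⟩,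
    hc f hf g hg hfg ⟨u, huf, hug⟩⟩

theorem isProper3EdgeColoring_of_adj
    (h : ∀ u v w, G.Adj u v → G.Adj u w → v ≠ w → c s(u, v) ≠ c s(u, w)) :
    IsProper3EdgeColoring G c := by
  rintro e he f hf hef ⟨u, hue, huf⟩
  obtain ⟨v, rfl⟩ := Sym2.mem_iff_exists.1 hue
  obtain ⟨w, rfl⟩ := Sym2.mem_iff_exists.1 huf
  exact h u v w he hf fun hvw => hef (hvw ▸ rfl)

def edgeColoringOfClasses [DecidableEq V] (M₀ M₁ : Finset (Sym2 V)) (e : Sym2 V) : Fin 3 :=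
  if e ∈ M₀ then 0 else if e ∈ M₁ then 1 else 2

end EdgeColoring

instance : DecidableRel blanusaB0.Adj := fun u v => by
  unfold blanusaB0
  infer_instance

theorem blanusaB0_pendant_colours {c : Sym2 (Fin 12) → Fin 3}
    (h₀ : Rainbow (c s(0, 1)) (c s(0, 3)) (c s(8, 0)))
    (h₁ : Rainbow (c s(0, 1)) (c s(1, 2)) (c s(1, 6)))
    (h₂ : Rainbow (c s(1, 2)) (c s(2, 4)) (c s(10, 2)))
    (h₃ : Rainbow (c s(0, 3)) (c s(3, 5)) (c s(3, 4)))
    (h₄ : Rainbow (c s(4, 7)) (c s(2, 4)) (c s(3, 4)))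
    (h₅ : Rainbow (c s(5, 6)) (c s(3, 5)) (c s(9, 5)))
    (h₆ : Rainbow (c s(6, 7)) (c s(5, 6)) (c s(1, 6)))
    (h₇ : Rainbow (c s(6, 7)) (c s(4, 7)) (c s(11, 7))) :
    c s(8, 0) = c s(11, 7) ∧ c s(9, 5) = c s(10, 2) := by
  rcases h₁.eq_and_eq_or_eq_and_eq h₆ with ⟨h01, h12⟩ | ⟨h01, h12⟩
  · rcases h₃.eq_and_eq_or_eq_and_eq h₄ with ⟨h03, h35⟩ | ⟨h03, h35⟩
    · refine ⟨(h₀.eq_of_ne_of_ne ?_ ?_).symm, h₂.eq_of_ne_of_ne ?_ ?_⟩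
      · rw [h01]; exact h₇.2.1.symm
      · rw [h03]; exact h₇.2.2.symm
      · rw [h12]; exact h₅.2.1.symm
      · rw [← h35]; exact h₅.2.2.symm
    · have h03_16 : c s(0, 3) = c s(1, 6) :=
        h₁.eq_of_ne_of_ne h₀.1.symm (by rw [h03]; exact h₂.1.symm)
      have h35_16 : c s(3, 5) = c s(1, 6) :=
        h₆.eq_of_ne_of_ne (by rw [h35]; exact h₇.1.symm) h₅.1.symm
      exact absurd (h03_16.trans h35_16.symm) h₃.1
  · have h01_34 : c s(0, 1) = c s(3, 4) :=
      h₃.eq_of_ne_of_ne h₀.1 (by rw [h01]; exact h₅.1)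
    have h12_34 : c s(1, 2) = c s(3, 4) :=
      h₄.eq_of_ne_of_ne (by rw [h12]; exact h₇.1) h₂.1
    exact absurd (h01_34.trans h12_34.symm) h₁.1

def blanusaB0SameColoring : Sym2 (Fin 12) → Fin 3 :=
  edgeColoringOfClasses {s(8, 0), s(9, 5), s(10, 2), s(11, 7), s(3, 4), s(1, 6)}
    {s(0, 1), s(6, 7), s(3, 5), s(2, 4)}

def blanusaB0SplitColoring : Sym2 (Fin 12) → Fin 3 :=
  edgeColoringOfClasses {s(8, 0), s(11, 7), s(3, 5), s(1, 6), s(2, 4)}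
    {s(9, 5), s(10, 2), s(0, 1), s(6, 7), s(3, 4)}

theorem isProper3EdgeColoring_blanusaB0SameColoring :
    IsProper3EdgeColoring blanusaB0 blanusaB0SameColoring :=
  isProper3EdgeColoring_of_adj (by decide)

theorem isProper3EdgeColoring_blanusaB0SplitColoring :
    IsProper3EdgeColoring blanusaB0 blanusaB0SplitColoring :=
  isProper3EdgeColoring_of_adj (by decide)

/-- The Blanuša block `B₀` has exactly two types of proper
3-edge-colourings: either all four pendant (half-)edges `a, a', b, b'` get the same colour,
or `a, a'` get one common colour and `b, b'` a different common colour; moreover both types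
do occur. -/
theorem blanusaB0_coloring_types :
    (∀ c : Sym2 (Fin 12) → Fin 3, IsProper3EdgeColoring blanusaB0 c →
      (c s((8 : Fin 12), 0) = c s((11 : Fin 12), 7) ∧
       c s((9 : Fin 12), 5) = c s((10 : Fin 12), 2) ∧
       c s((8 : Fin 12), 0) = c s((9 : Fin 12), 5)) ∨
      (c s((8 : Fin 12), 0) = c s((11 : Fin 12), 7) ∧
       c s((9 : Fin 12), 5) = c s((10 : Fin 12), 2) ∧
       c s((8 : Fin 12), 0) ≠ c s((9 : Fin 12), 5))) ∧
    (∃ c : Sym2 (Fin 12) → Fin 3, IsProper3EdgeColoring blanusaB0 c ∧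
      c s((8 : Fin 12), 0) = c s((11 : Fin 12), 7) ∧
      c s((9 : Fin 12), 5) = c s((10 : Fin 12), 2) ∧
      c s((8 : Fin 12), 0) = c s((9 : Fin 12), 5)) ∧
    (∃ c : Sym2 (Fin 12) → Fin 3, IsProper3EdgeColoring blanusaB0 c ∧
      c s((8 : Fin 12), 0) = c s((11 : Fin 12), 7) ∧
      c s((9 : Fin 12), 5) = c s((10 : Fin 12), 2) ∧
      c s((8 : Fin 12), 0) ≠ c s((9 : Fin 12), 5)) := by
  refine ⟨fun c hc => ?_,
    ⟨_, isProper3EdgeColoring_blanusaB0SameColoring, by decide, by decide, by decide⟩,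
    ⟨_, isProper3EdgeColoring_blanusaB0SplitColoring, by decide, by decide, by decide⟩⟩
  obtain ⟨ha, hb⟩ := blanusaB0_pendant_colours (hc.rainbow 0) (hc.rainbow 1) (hc.rainbow 2)
    (hc.rainbow 3) (hc.rainbow 4) (hc.rainbow 5) (hc.rainbow 6) (hc.rainbow 7)
  by_cases hab : c s(8, 0) = c s(9, 5)
  exacts [Or.inl ⟨ha, hb, hab⟩, Or.inr ⟨ha, hb, hab⟩]
end

section
/- Let G be a 2-connected cubic graph drawn in the plane with precisely one crossing, involving edges x x''' and x' x''. Let G* be obtained from G by deleting these two edges and inserting a Blanuša block B_0, joining x to a, x''' to a', x' to b, and x'' to b'. Then G* is 3-edge-colorable if and only if G is 3-edge-colorable. -/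
open SimpleGraph Classical

/-- `G` is 2-connected: at least 3 vertices, connected, and no cutvertex. -/
def IsTwoConnected {V : Type*} [Fintype V] (G : SimpleGraph V) : Prop :=
  3 ≤ Fintype.card V ∧ G.Connected ∧ ∀ v : V, (G.induce {u | u ≠ v}).Connected


/-!
In every proper 3-edge-colouring of the Blanuša block `B₀` the half-edges `a, a'` share a colour
and so do `b, b'`, and each of the patterns "all equal" and "two distinct colours" occurs.
Hence a colouring of `G*` descends to `G` by giving `x x'''` the colour of `a` and `x' x''` the
colour of `b`. Conversely a colouring `c` of `G` extends to `G*` through a colouring of `B₀`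
giving `a, a', b, b'` the colours `c(x x'''), c(x x'''), c(x' x''), c(x' x'')`: one of two fixed
colourings of `B₀`, with its colours permuted.
Properness is checked vertex by vertex: around an old vertex `p`, `G*` looks like `G` (the
neighbour `q` replaced by `blanusaLink … p q`), and around a block vertex it looks like `B₀`.
-/

open Sum Function

section ProperColoring

variable {V W : Type*} {G : SimpleGraph V} {c : Sym2 V → Fin 3}

theorem isProper3EdgeColoring_iff_adj :
    IsProper3EdgeColoring G c ↔
      ∀ ⦃u v w : V⦄, G.Adj u v → G.Adj u w → v ≠ w → c s(u, v) ≠ c s(u, w) := by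
  refine ⟨fun hc u v w huv huw hvw => ?_, fun h e he f hf hne ⟨u, hue, huf⟩ => ?_⟩
  · exact hc _ huv _ huw (fun h => hvw (Sym2.congr_right.mp h))
      ⟨u, Sym2.mem_mk_left u v, Sym2.mem_mk_left u w⟩
  · obtain ⟨v, rfl⟩ := Sym2.mem_iff_exists.mp hue
    obtain ⟨w, rfl⟩ := Sym2.mem_iff_exists.mp huf
    exact h he hf (fun hvw => hne (hvw ▸ rfl))

theorem IsProper3EdgeColoring.comp_injective (hc : IsProper3EdgeColoring G c)
    {σ : Fin 3 → Fin 3} (hσ : Injective σ) : IsProper3EdgeColoring G (σ ∘ c) :=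
  fun e he f hf hne hef => hσ.ne (hc e he f hf hne hef)

theorem IsProper3EdgeColoring.comap {H : SimpleGraph W} {c : Sym2 W → Fin 3}
    (hc : IsProper3EdgeColoring H c) (f : G →g H) (hf : Injective f) :
    IsProper3EdgeColoring G (c ∘ Sym2.map f) :=
  isProper3EdgeColoring_iff_adj.mpr fun _ _ _ huv huw hvw =>
    isProper3EdgeColoring_iff_adj.mp hc (f.map_adj huv) (f.map_adj huw) (hf.ne hvw)

theorem Fin.eq_neg_add_of_ne {a b c : Fin 3} (hab : a ≠ b) (hac : a ≠ c) (hbc : b ≠ c) :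
    c = -(a + b) := by
  revert a b c
  decide

theorem IsProper3EdgeColoring.eq_neg_add (hc : IsProper3EdgeColoring G c) {e f g : Sym2 V}
    (he : e ∈ G.edgeSet) (hf : f ∈ G.edgeSet) (hg : g ∈ G.edgeSet)
    (hef : e ≠ f) (heg : e ≠ g) (hfg : f ≠ g) {u : V} (hue : u ∈ e) (huf : u ∈ f)
    (hug : u ∈ g) :
    c e ≠ c f ∧ c g = -(c e + c f) := by
  have hcef := hc e he f hf hef ⟨u, hue, huf⟩
  exact ⟨hcef, Fin.eq_neg_add_of_ne hcef (hc e he g hg heg ⟨u, hue, hug⟩)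
    (hc f hf g hg hfg ⟨u, huf, hug⟩)⟩

end ProperColoring

section BlanusaBlock

instance inst_s11 : DecidableRel blanusaB0.Adj := fun u v => by
  unfold blanusaB0; rw [fromEdgeSet_adj]; infer_instance

theorem IsProper3EdgeColoring.blanusaB0_halfEdge_eq {d : Sym2 (Fin 12) → Fin 3}
    (hd : IsProper3EdgeColoring blanusaB0 d) :
    d s(8, 0) = d s(11, 7) ∧ d s(9, 5) = d s(10, 2) := by
  have vertex : ∀ e f g : Sym2 (Fin 12),
      (e ∈ blanusaB0.edgeSet ∧ f ∈ blanusaB0.edgeSet ∧ g ∈ blanusaB0.edgeSet ∧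
        e ≠ f ∧ e ≠ g ∧ f ≠ g ∧ ∃ u, u ∈ e ∧ u ∈ f ∧ u ∈ g) →
      d e ≠ d f ∧ d g = -(d e + d f) :=
    fun e f g ⟨he, hf, hg, hef, heg, hfg, u, hue, huf, hug⟩ =>
      hd.eq_neg_add he hf hg hef heg hfg hue huf hug
  obtain ⟨h0, e0⟩ := vertex s(0, 1) s(0, 3) s(8, 0) (by decide)
  obtain ⟨h1, e1⟩ := vertex s(0, 1) s(1, 2) s(1, 6) (by decide)
  obtain ⟨h2, e2⟩ := vertex s(1, 2) s(2, 4) s(10, 2) (by decide)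
  obtain ⟨h3, e3⟩ := vertex s(0, 3) s(3, 4) s(3, 5) (by decide)
  obtain ⟨h4, e4⟩ := vertex s(3, 4) s(2, 4) s(4, 7) (by decide)
  obtain ⟨h5, e5⟩ := vertex s(5, 6) s(3, 5) s(9, 5) (by decide)
  obtain ⟨h6, e6⟩ := vertex s(5, 6) s(1, 6) s(6, 7) (by decide)
  obtain ⟨h7, e7⟩ := vertex s(6, 7) s(4, 7) s(11, 7) (by decide)
  -- The colours of the edges `01, 03, 12, 24, 34, 56` now determine all others,
  -- so `decide` only has to run through `3 ^ 6` cases.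
  simp only [e0, e1, e2, e3, e4, e5, e6, e7] at h5 h6 h7 ⊢
  generalize d s(0, 1) = c01, d s(0, 3) = c03, d s(1, 2) = c12, d s(2, 4) = c24,
    d s(3, 4) = c34, d s(5, 6) = c56 at h0 h1 h2 h3 h4 h5 h6 h7 ⊢
  revert c01 c03 c12 c24 c34 c56
  decide

def colorByClasses {V : Type*} [DecidableEq V] (M₁ M₂ : Finset (Sym2 V)) : Sym2 V → Fin 3 :=
  fun e => if e ∈ M₁ then 1 else if e ∈ M₂ then 2 else 0

theorem exists_blanusaB0_coloring (α β : Fin 3) :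
    ∃ d : Sym2 (Fin 12) → Fin 3, IsProper3EdgeColoring blanusaB0 d ∧
      d s(8, 0) = α ∧ d s(11, 7) = α ∧ d s(9, 5) = β ∧ d s(10, 2) = β := by
  by_cases hαβ : α = β
  · subst hαβ
    let d : Sym2 (Fin 12) → Fin 3 :=
      colorByClasses {s(0, 1), s(6, 7), s(3, 5), s(2, 4)} {s(1, 2), s(5, 6), s(0, 3), s(4, 7)}
    have hd : IsProper3EdgeColoring blanusaB0 d := isProper3EdgeColoring_iff_adj.mpr (by decide)
    refine ⟨(α + ·) ∘ d, hd.comp_injective (add_right_injective α), ?_⟩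
    revert α
    decide
  · let d : Sym2 (Fin 12) → Fin 3 :=
      colorByClasses {s(9, 5), s(10, 2), s(0, 1), s(6, 7), s(3, 4)}
        {s(1, 2), s(5, 6), s(0, 3), s(4, 7)}
    have hd : IsProper3EdgeColoring blanusaB0 d := isProper3EdgeColoring_iff_adj.mpr (by decide)
    have hσ : Injective fun t => α + (β - α) * t := by
      revert α β
      decide
    refine ⟨(fun t => α + (β - α) * t) ∘ d, hd.comp_injective hσ, ?_⟩
    clear hσ hd hαβ
    revert α β
    decide

end BlanusaBlock

section BlanusaInsert

variable {V : Type*} {G : SimpleGraph V} {x x' x'' x''' : V}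

theorem blanusaInsert_adj_inl_inl {p q : V} :
    (blanusaInsert G x x' x'' x''').Adj (inl p) (inl q) ↔
      G.Adj p q ∧ s(p, q) ≠ s(x, x''') ∧ s(p, q) ≠ s(x', x'') := by
  have hmap : s(inl p, inl q) = Sym2.map (inl : V → V ⊕ Fin 8) s(p, q) := rfl
  rw [blanusaInsert, fromEdgeSet_adj, hmap, Set.mem_union,
    (Sym2.map.injective inl_injective).mem_set_image]
  simp only [Set.mem_sdiff, mem_edgeSet, Set.mem_insert_iff, Set.mem_singleton_iff, ne_eq]
  constructor
  · rintro ⟨⟨h, _⟩ | h, -⟩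
    · tauto
    · simp at h
  · rintro ⟨h, h1, h2⟩
    exact ⟨.inl ⟨h, by tauto⟩, by simpa using h.ne⟩

theorem blanusaInsert_adj_inl_inr {p : V} {j : Fin 8} :
    (blanusaInsert G x x' x'' x''').Adj (inl p) (inr j) ↔
      p = x ∧ j = 0 ∨ p = x''' ∧ j = 7 ∨ p = x' ∧ j = 2 ∨ p = x'' ∧ j = 5 := by
  simp [blanusaInsert, Sym2.exists]

theorem blanusaInsert_adj_inr_inr {i j : Fin 8} :
    (blanusaInsert G x x' x'' x''').Adj (inr i) (inr j) ↔
      blanusaB0.Adj (Fin.castAdd 4 i) (Fin.castAdd 4 j) := by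
  simp [blanusaInsert, Sym2.exists]
  revert i j
  decide

def blanusaEmbedding (x x' x'' x''' : V) : Fin 12 → V ⊕ Fin 8 :=
  ![inr 0, inr 1, inr 2, inr 3, inr 4, inr 5, inr 6, inr 7, inl x, inl x'', inl x', inl x''']

theorem blanusaEmbedding_castAdd (i : Fin 8) :
    blanusaEmbedding x x' x'' x''' (Fin.castAdd 4 i) = inr i := by
  fin_cases i <;> rfl

theorem blanusaEmbedding_injective (hdist : [x, x', x'', x'''].Nodup) :
    Injective (blanusaEmbedding x x' x'' x''') := by
  rw [← List.nodup_ofFn]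
  simp [blanusaEmbedding, List.ofFn_succ] at hdist ⊢
  tauto

theorem blanusaInsert_adj_inr_embedding (hdist : [x, x', x'', x'''].Nodup) {i : Fin 8}
    {l : Fin 12} :
    (blanusaInsert G x x' x'' x''').Adj (inr i) (blanusaEmbedding x x' x'' x''' l) ↔
      blanusaB0.Adj (Fin.castAdd 4 i) l := by
  simp only [List.nodup_cons, List.mem_cons, List.not_mem_nil, not_or] at hdist
  obtain ⟨⟨h12, h13, h14, -⟩, ⟨h23, h24, -⟩, ⟨h34, -⟩, -⟩ := hdist
  induction l using Fin.addCases (m := 8) (n := 4) with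
  | left j => rw [blanusaEmbedding_castAdd, blanusaInsert_adj_inr_inr]
  | right k =>
    rw [adj_comm]
    fin_cases k <;> simp [blanusaEmbedding, blanusaInsert_adj_inl_inr, h12, h13, h14, h23, h24, h34,
      Ne.symm h12, Ne.symm h13, Ne.symm h14, Ne.symm h23, Ne.symm h24, Ne.symm h34] <;>
      revert i <;> decide

theorem exists_blanusaEmbedding_eq_of_adj_inr {i : Fin 8} {v : V ⊕ Fin 8}
    (h : (blanusaInsert G x x' x'' x''').Adj (inr i) v) :
    ∃ l, blanusaEmbedding x x' x'' x''' l = v := by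
  cases v with
  | inl p =>
    rw [adj_comm, blanusaInsert_adj_inl_inr] at h
    rcases h with ⟨rfl, -⟩ | ⟨rfl, -⟩ | ⟨rfl, -⟩ | ⟨rfl, -⟩
    exacts [⟨8, rfl⟩, ⟨11, rfl⟩, ⟨10, rfl⟩, ⟨9, rfl⟩]
  | inr j => exact ⟨Fin.castAdd 4 j, blanusaEmbedding_castAdd j⟩

theorem exists_castAdd_of_blanusaB0_adj {k l : Fin 12} (h : blanusaB0.Adj k l) :
    ∃ i : Fin 8, Fin.castAdd 4 i = k ∨ Fin.castAdd 4 i = l := by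
  revert k l
  decide

theorem blanusaInsert_adj_blanusaEmbedding (hdist : [x, x', x'', x'''].Nodup) {k l : Fin 12}
    (h : blanusaB0.Adj k l) :
    (blanusaInsert G x x' x'' x''').Adj (blanusaEmbedding x x' x'' x''' k)
      (blanusaEmbedding x x' x'' x''' l) := by
  obtain ⟨i, rfl | rfl⟩ := exists_castAdd_of_blanusaB0_adj h
  · rwa [blanusaEmbedding_castAdd, blanusaInsert_adj_inr_embedding hdist]
  · rwa [adj_comm, blanusaEmbedding_castAdd, blanusaInsert_adj_inr_embedding hdist, adj_comm]

/-- The neighbour of `inl p` in `G*` that takes the place of the neighbour `q` of `p` in `G`. -/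
noncomputable def blanusaLink (x x' x'' x''' p q : V) : V ⊕ Fin 8 :=
  if s(p, q) = s(x, x''') then (if p = x then inr 0 else inr 7)
  else if s(p, q) = s(x', x'') then (if p = x' then inr 2 else inr 5)
  else inl q

theorem blanusaInsert_adj_blanusaLink {p q : V} (h : G.Adj p q) :
    (blanusaInsert G x x' x'' x''').Adj (inl p) (blanusaLink x x' x'' x''' p q) := by
  unfold blanusaLink
  split_ifs <;> simp_all [blanusaInsert_adj_inl_inl, blanusaInsert_adj_inl_inr]

theorem blanusaLink_injective (p : V) : Injective (blanusaLink x x' x'' x''' p) := by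
  intro q r h
  have hcongr {e : Sym2 V} (hq : s(p, q) = e) (hr : s(p, r) = e) : q = r :=
    Sym2.congr_right.mp (hq.trans hr.symm)
  unfold blanusaLink at h
  split_ifs at h <;> first | exact hcongr ‹_› ‹_› | simp_all

theorem exists_blanusaLink_eq_of_adj (he1 : G.Adj x x''') (he2 : G.Adj x' x'')
    (hne : s(x, x''') ≠ s(x', x'')) {p : V} {v : V ⊕ Fin 8}
    (h : (blanusaInsert G x x' x'' x''').Adj (inl p) v) :
    ∃ q, G.Adj p q ∧ blanusaLink x x' x'' x''' p q = v := by
  cases v with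
  | inl q =>
    rw [blanusaInsert_adj_inl_inl] at h
    exact ⟨q, h.1, by simp [blanusaLink, h.2.1, h.2.2]⟩
  | inr j =>
    rw [blanusaInsert_adj_inl_inr] at h
    rcases h with ⟨hp, rfl⟩ | ⟨hp, rfl⟩ | ⟨hp, rfl⟩ | ⟨hp, rfl⟩ <;> subst p
    · exact ⟨x''', he1, by simp [blanusaLink]⟩
    · exact ⟨x, he1.symm, by simp [blanusaLink, Sym2.eq_swap, he1.ne.symm]⟩
    · exact ⟨x'', he2, by simp [blanusaLink, hne.symm]⟩
    · exact ⟨x', he2.symm, by simp [blanusaLink, Sym2.eq_swap, hne.symm, he2.ne.symm]⟩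

noncomputable def blanusaContractColoring (x x' x'' x''' : V) (c : Sym2 (V ⊕ Fin 8) → Fin 3) :
    Sym2 V → Fin 3 := fun e =>
  if e = s(x, x''') then c s(inl x, inr 0)
  else if e = s(x', x'') then c s(inl x', inr 2)
  else c (e.map inl)

theorem blanusaContractColoring_mk {c : Sym2 (V ⊕ Fin 8) → Fin 3}
    (h07 : c s(inl x, inr 0) = c s(inl x''', inr 7))
    (h25 : c s(inl x', inr 2) = c s(inl x'', inr 5)) (p q : V) :
    blanusaContractColoring x x' x'' x''' c s(p, q) =
      c s(inl p, blanusaLink x x' x'' x''' p q) := by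
  unfold blanusaContractColoring blanusaLink
  split_ifs <;> simp_all

theorem IsProper3EdgeColoring.blanusaContractColoring (hdist : [x, x', x'', x'''].Nodup)
    {c : Sym2 (V ⊕ Fin 8) → Fin 3}
    (hc : IsProper3EdgeColoring (blanusaInsert G x x' x'' x''') c) :
    IsProper3EdgeColoring G (blanusaContractColoring x x' x'' x''' c) := by
  obtain ⟨h07, h25⟩ := (hc.comap ⟨_, blanusaInsert_adj_blanusaEmbedding hdist⟩
    (blanusaEmbedding_injective hdist)).blanusaB0_halfEdge_eq
  refine isProper3EdgeColoring_iff_adj.mpr fun p q r hq hr hqr => ?_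
  rw [blanusaContractColoring_mk h07 h25.symm, blanusaContractColoring_mk h07 h25.symm]
  exact isProper3EdgeColoring_iff_adj.mp hc (blanusaInsert_adj_blanusaLink hq)
    (blanusaInsert_adj_blanusaLink hr) ((blanusaLink_injective p).ne hqr)

noncomputable def blanusaExtendColoring (x x' x'' x''' : V) (c : Sym2 V → Fin 3)
    (d : Sym2 (Fin 12) → Fin 3) : Sym2 (V ⊕ Fin 8) → Fin 3 := fun e =>
  if h : e ∈ Set.range (Sym2.map inl) then c h.choose
  else d (e.map (invFun (blanusaEmbedding x x' x'' x''')))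

variable {c : Sym2 V → Fin 3} {d : Sym2 (Fin 12) → Fin 3}

theorem blanusaExtendColoring_map_inl (g : Sym2 V) :
    blanusaExtendColoring x x' x'' x''' c d (g.map inl) = c g := by
  have h : g.map inl ∈ Set.range (Sym2.map (inl : V → V ⊕ Fin 8)) := ⟨g, rfl⟩
  rw [blanusaExtendColoring, dif_pos h, Sym2.map.injective inl_injective h.choose_spec]

theorem blanusaExtendColoring_inr_embedding (hdist : [x, x', x'', x'''].Nodup) (i : Fin 8)
    (l : Fin 12) :
    blanusaExtendColoring x x' x'' x''' c d s(inr i, blanusaEmbedding x x' x'' x''' l) =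
      d s(Fin.castAdd 4 i, l) := by
  have h : s(inr i, blanusaEmbedding x x' x'' x''' l) ∉ Set.range (Sym2.map inl) := by
    rintro ⟨g, hg⟩
    induction g using Sym2.ind
    simp at hg
  rw [blanusaExtendColoring, dif_neg h, Sym2.map_mk, ← blanusaEmbedding_castAdd i,
    leftInverse_invFun (blanusaEmbedding_injective hdist),
    leftInverse_invFun (blanusaEmbedding_injective hdist)]

theorem blanusaExtendColoring_link (hdist : [x, x', x'', x'''].Nodup)
    (hbd : d s(8, 0) = c s(x, x''') ∧ d s(11, 7) = c s(x, x''') ∧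
      d s(9, 5) = c s(x', x'') ∧ d s(10, 2) = c s(x', x'')) (p q : V) :
    blanusaExtendColoring x x' x'' x''' c d s(inl p, blanusaLink x x' x'' x''' p q) =
      c s(p, q) := by
  have half (l : Fin 12) (i : Fin 8) :
      blanusaExtendColoring x x' x'' x''' c d s(blanusaEmbedding x x' x'' x''' l, inr i) =
        d s(l, Fin.castAdd 4 i) := by
    rw [Sym2.eq_swap, blanusaExtendColoring_inr_embedding hdist, Sym2.eq_swap]
  unfold blanusaLink
  split_ifs with h1 h2 h3 h4
  · subst h2
    rw [h1]
    exact (half 8 0).trans hbd.1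
  · obtain rfl : p = x''' := by rw [Sym2.eq_iff] at h1; tauto
    rw [h1]
    exact (half 11 7).trans hbd.2.1
  · subst h4
    rw [h3]
    exact (half 10 2).trans hbd.2.2.2
  · obtain rfl : p = x'' := by rw [Sym2.eq_iff] at h3; tauto
    rw [h3]
    exact (half 9 5).trans hbd.2.2.1
  · exact blanusaExtendColoring_map_inl s(p, q)

theorem IsProper3EdgeColoring.blanusaExtendColoring (he1 : G.Adj x x''') (he2 : G.Adj x' x'')
    (hdist : [x, x', x'', x'''].Nodup) (hc : IsProper3EdgeColoring G c)
    (hd : IsProper3EdgeColoring blanusaB0 d)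
    (hbd : d s(8, 0) = c s(x, x''') ∧ d s(11, 7) = c s(x, x''') ∧
      d s(9, 5) = c s(x', x'') ∧ d s(10, 2) = c s(x', x'')) :
    IsProper3EdgeColoring (blanusaInsert G x x' x'' x''')
      (blanusaExtendColoring x x' x'' x''' c d) := by
  have hne : s(x, x''') ≠ s(x', x'') := by
    simp only [List.nodup_cons, List.mem_cons, List.not_mem_nil, not_or] at hdist
    simp only [ne_eq, Sym2.eq_iff]
    tauto
  refine isProper3EdgeColoring_iff_adj.mpr fun u v w huv huw hvw => ?_
  cases u with
  | inl p =>
    obtain ⟨q, hq, rfl⟩ := exists_blanusaLink_eq_of_adj he1 he2 hne huv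
    obtain ⟨r, hr, rfl⟩ := exists_blanusaLink_eq_of_adj he1 he2 hne huw
    rw [blanusaExtendColoring_link hdist hbd, blanusaExtendColoring_link hdist hbd]
    exact isProper3EdgeColoring_iff_adj.mp hc hq hr (fun h => hvw (h ▸ rfl))
  | inr i =>
    obtain ⟨k, rfl⟩ := exists_blanusaEmbedding_eq_of_adj_inr huv
    obtain ⟨l, rfl⟩ := exists_blanusaEmbedding_eq_of_adj_inr huw
    rw [blanusaInsert_adj_inr_embedding hdist] at huv huw
    rw [blanusaExtendColoring_inr_embedding hdist, blanusaExtendColoring_inr_embedding hdist]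
    exact isProper3EdgeColoring_iff_adj.mp hd huv huw (fun h => hvw (h ▸ rfl))

end BlanusaInsert

theorem blanusaInsert_proper3EdgeColorable_iff_general
    {V : Type*} (G : SimpleGraph V) (x x' x'' x''' : V)
    (he1 : G.Adj x x''') (he2 : G.Adj x' x'')
    (hdist : [x, x', x'', x'''].Nodup) :
    (Proper3EdgeColorable (blanusaInsert G x x' x'' x''') ↔ Proper3EdgeColorable G) := by
  constructor
  · rintro ⟨c, hc⟩
    exact ⟨_, hc.blanusaContractColoring hdist⟩
  · rintro ⟨c, hc⟩
    obtain ⟨d, hd, hbd⟩ := exists_blanusaB0_coloring (c s(x, x''')) (c s(x', x''))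
    exact ⟨_, hc.blanusaExtendColoring he1 he2 hdist hd hbd⟩

/-- Let `G` be a 2-connected cubic graph drawn in the plane with exactly
one crossing, involving the edges `x x'''` and `x' x''` (so that `G` minus these two edges is
planar). Then the graph `G*` obtained by replacing the crossing by a Blanuša block `B₀` is
3-edge-colourable iff `G` is. -/
theorem blanusaInsert_proper3EdgeColorable_iff
    {V : Type*} [Fintype V] (G : SimpleGraph V) (x x' x'' x''' : V)
    (hcubic : IsCubic G) (h2conn : IsTwoConnected G)
    (he1 : G.Adj x x''') (he2 : G.Adj x' x'')
    (hdist : [x, x', x'', x'''].Nodup)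
    (hdraw : IsPlanar (G.deleteEdges {s(x, x'''), s(x', x'')})) :
    (Proper3EdgeColorable (blanusaInsert G x x' x'' x''') ↔ Proper3EdgeColorable G) :=
  blanusaInsert_proper3EdgeColorable_iff_general G x x' x'' x''' he1 he2 hdist
end

section
/- With G and G* as in the Blanuša block insertion construction, G* contains a spanning subgraph homeomorphic to G: namely (G \ {x x''', x' x''}) together with the two paths x u_0 u_3 u_4 u_7 x''' and x' u_2 u_1 u_6 u_5 x'' through the inserted block B_0. -/
open SimpleGraph Classical

/-- `H` is a subdivision of `G`: there is an embedding `f` of the vertices of `G` and a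
choice of internally disjoint paths in `H` joining the images of the ends of each edge of
`G`, which together exhaust all edges and vertices of `H`. -/
def IsSubdivisionOf {W V : Type*} (H : SimpleGraph W) (G : SimpleGraph V) : Prop :=
  ∃ (f : V ↪ W) (w : ∀ u v : V, G.Adj u v → H.Walk (f u) (f v)),
    (∀ u v (h : G.Adj u v), (w u v h).IsPath) ∧
    (∀ u v (h : G.Adj u v), w v u h.symm = (w u v h).reverse) ∧
    (∀ u v (h : G.Adj u v) (t : W), t ∈ (w u v h).support → t ∈ Set.range f →
      t = f u ∨ t = f v) ∧
    (∀ u v (h : G.Adj u v) (t : W), t ∈ (w u v h).support → t ∉ Set.range f →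
      ∀ u' v' (h' : G.Adj u' v'), t ∈ (w u' v' h').support → s(u, v) = s(u', v')) ∧
    (∀ e ∈ H.edgeSet, ∃ (u v : V) (h : G.Adj u v), e ∈ (w u v h).edges) ∧
    (∀ t : W, t ∈ Set.range f ∨ ∃ (u v : V) (h : G.Adj u v), t ∈ (w u v h).support)

/-- The spanning subgraph of `G* = blanusaInsert G x x' x'' x'''` consisting of
`G \ {x x''', x' x''}` together with the two paths `x u₀ u₃ u₄ u₇ x'''` and
`x' u₂ u₁ u₆ u₅ x''` through the inserted Blanuša block. -/
def blanusaPathSpan {V : Type*} (G : SimpleGraph V) (x x' x'' x''' : V) :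
    SimpleGraph (V ⊕ Fin 8) :=
  SimpleGraph.fromEdgeSet (
    (Sym2.map Sum.inl '' (G.edgeSet \ {s(x, x'''), s(x', x'')})) ∪
    {s(Sum.inl x, Sum.inr 0), s(Sum.inr (0 : Fin 8), Sum.inr 3),
     s(Sum.inr (3 : Fin 8), Sum.inr 4), s(Sum.inr (4 : Fin 8), Sum.inr 7),
     s(Sum.inl x''', Sum.inr 7),
     s(Sum.inl x', Sum.inr 2), s(Sum.inr (2 : Fin 8), Sum.inr 1),
     s(Sum.inr (1 : Fin 8), Sum.inr 6), s(Sum.inr (6 : Fin 8), Sum.inr 5),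
     s(Sum.inl x'', Sum.inr 5)})

/-!
The spanning subgraph is `G` with the edge `x x'''` subdivided by `u₀ u₃ u₄ u₇` and the edge
`x' x''` by `u₂ u₁ u₆ u₅`; its edges are edges of `G*` by inspection. Subdividing every edge `uv`
of a graph along a list `r u v` of new vertices yields a subdivision, witnessed by the paths
`u, r u v, v`, as soon as the lists are duplicate-free, reversed when `u` and `v` are swapped,
disjoint for distinct edges, and together cover all new vertices.
-/

namespace SimpleGraph

variable {V ι : Type*}

def routeSupport (r : V → V → List ι) (u v : V) : List (V ⊕ ι) :=
  Sum.inl u :: (r u v).map Sum.inr ++ [Sum.inl v]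

def subdivide (G : SimpleGraph V) (r : V → V → List ι) : SimpleGraph (V ⊕ ι) :=
  fromEdgeSet {e | ∃ u v, G.Adj u v ∧ ∃ a b, [a, b] <:+: routeSupport r u v ∧ s(a, b) = e}

variable {G : SimpleGraph V} {r : V → V → List ι} {u v : V}

lemma routeSupport_ne_nil : routeSupport r u v ≠ [] := List.cons_ne_nil _ _

lemma head_routeSupport : (routeSupport r u v).head routeSupport_ne_nil = Sum.inl u := rfl

lemma getLast_routeSupport : (routeSupport r u v).getLast routeSupport_ne_nil = Sum.inl v := by
  simp [routeSupport]

lemma nodup_routeSupport (h : G.Adj u v) (hr : (r u v).Nodup) : (routeSupport r u v).Nodup := by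
  simp [routeSupport, List.nodup_append, hr.map Sum.inr_injective, h.ne]

lemma reverse_routeSupport (hrev : r v u = (r u v).reverse) :
    (routeSupport r u v).reverse = routeSupport r v u := by
  simp [routeSupport, hrev, List.map_reverse]

lemma infix_routeSupport_swap {a b : V ⊕ ι} (hrev : r v u = (r u v).reverse)
    (h : [a, b] <:+: routeSupport r v u) : [b, a] <:+: routeSupport r u v := by
  rw [← reverse_routeSupport hrev] at h
  simpa using List.reverse_infix.mpr h

lemma isChain_adj_routeSupport (h : G.Adj u v) (hr : (r u v).Nodup) :
    (routeSupport r u v).IsChain (subdivide G r).Adj := by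
  refine List.isChain_iff_forall_rel_of_append_cons_cons.mpr fun a b l₁ l₂ hl => ?_
  have hnd := hl ▸ nodup_routeSupport h hr
  simp only [List.nodup_append, List.nodup_cons, List.mem_cons] at hnd
  exact (fromEdgeSet_adj _).mpr
    ⟨⟨u, v, h, a, b, ⟨l₁, l₂, by simp [hl]⟩, rfl⟩, fun hab => hnd.2.1.1 (Or.inl hab)⟩

noncomputable def routeWalk (h : G.Adj u v) (hr : (r u v).Nodup) :
    (subdivide G r).Walk (Sum.inl u) (Sum.inl v) :=
  (Walk.ofSupport _ routeSupport_ne_nil (isChain_adj_routeSupport h hr)).copy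
    head_routeSupport getLast_routeSupport

@[simp]
lemma support_routeWalk (h : G.Adj u v) (hr : (r u v).Nodup) :
    (routeWalk h hr).support = routeSupport r u v := by
  rw [routeWalk, Walk.support_copy, Walk.support_ofSupport]

theorem isSubdivisionOf_subdivide (hnodup : ∀ u v, G.Adj u v → (r u v).Nodup)
    (hrev : ∀ u v, G.Adj u v → r v u = (r u v).reverse)
    (hsep : ∀ u v u' v' i, G.Adj u v → G.Adj u' v' → i ∈ r u v → i ∈ r u' v' →
      s(u, v) = s(u', v'))
    (hcover : ∀ i, ∃ u v, G.Adj u v ∧ i ∈ r u v) :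
    IsSubdivisionOf (subdivide G r) G := by
  refine ⟨⟨Sum.inl, Sum.inl_injective⟩, fun u v h => routeWalk h (hnodup u v h),
    ?isPath, ?reverse, ?ends, ?interior, ?edges, ?vertices⟩
  case isPath =>
    intro u v h
    rw [Walk.isPath_def, support_routeWalk]
    exact nodup_routeSupport h (hnodup u v h)
  case reverse =>
    intro u v h
    apply Walk.ext_support
    rw [Walk.support_reverse, support_routeWalk, support_routeWalk,
      reverse_routeSupport (hrev u v h)]
  case ends =>
    rintro u v h _ ht ⟨t, rfl⟩
    simpa [routeSupport, or_comm] using ht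
  case interior =>
    rintro u v h (t | i) ht hnt u' v' h' ht'
    · exact absurd ⟨t, rfl⟩ hnt
    · exact hsep u v u' v' i h h' (by simpa [routeSupport] using ht)
        (by simpa [routeSupport] using ht')
  case edges =>
    intro e he
    rw [subdivide, edgeSet_fromEdgeSet] at he
    obtain ⟨⟨u, v, h, a, b, hab, rfl⟩, -⟩ := he
    refine ⟨u, v, h, Walk.infix_support_iff_mem_edges.mp (Or.inl ?_)⟩
    rwa [support_routeWalk]
  case vertices =>
    rintro (t | i)
    · exact Or.inl ⟨t, rfl⟩
    · obtain ⟨u, v, h, hi⟩ := hcover i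
      exact Or.inr ⟨u, v, h, by simp [routeSupport, hi]⟩

end SimpleGraph

section Blanusa

variable {V : Type*} {G : SimpleGraph V} {x x' x'' x''' : V}

variable (x x' x'' x''') in
noncomputable def blanusaRoute (u v : V) : List (Fin 8) :=
  if u = x ∧ v = x''' then [0, 3, 4, 7]
  else if u = x''' ∧ v = x then [7, 4, 3, 0]
  else if u = x' ∧ v = x'' then [2, 1, 6, 5]
  else if u = x'' ∧ v = x' then [5, 6, 1, 2]
  else []

lemma blanusaRoute_nodup (u v : V) : (blanusaRoute x x' x'' x''' u v).Nodup := by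
  unfold blanusaRoute; split_ifs <;> decide

lemma blanusaRoute_swap (hdist : [x, x', x'', x'''].Nodup) (u v : V) :
    blanusaRoute x x' x'' x''' v u = (blanusaRoute x x' x'' x''' u v).reverse := by
  simp only [List.nodup_cons, List.mem_cons, List.not_mem_nil, or_false, not_or] at hdist
  unfold blanusaRoute; split_ifs <;> simp_all

lemma sym2_eq_of_mem_blanusaRoute (hdist : [x, x', x'', x'''].Nodup) (u v u' v' : V) (i : Fin 8)
    (hi : i ∈ blanusaRoute x x' x'' x''' u v) (hi' : i ∈ blanusaRoute x x' x'' x''' u' v') :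
    s(u, v) = s(u', v') := by
  simp only [List.nodup_cons, List.mem_cons, List.not_mem_nil, or_false, not_or] at hdist
  unfold blanusaRoute at hi hi'
  split_ifs at hi hi' <;> simp_all <;> omega

lemma blanusaRoute_eq_nil {u v : V} (h1 : s(u, v) ≠ s(x, x''')) (h2 : s(u, v) ≠ s(x', x'')) :
    blanusaRoute x x' x'' x''' u v = [] := by
  simp only [ne_eq, Sym2.eq_iff, not_or] at h1 h2
  rw [blanusaRoute, if_neg h1.1, if_neg h1.2, if_neg h2.1, if_neg h2.2]

lemma blanusaRoute_first : blanusaRoute x x' x'' x''' x x''' = [0, 3, 4, 7] := if_pos ⟨rfl, rfl⟩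

lemma blanusaRoute_second (hdist : [x, x', x'', x'''].Nodup) :
    blanusaRoute x x' x'' x''' x' x'' = [2, 1, 6, 5] := by
  simp only [List.nodup_cons, List.mem_cons, List.not_mem_nil, or_false, not_or] at hdist
  simp_all [blanusaRoute]

lemma exists_mem_blanusaRoute (hdist : [x, x', x'', x'''].Nodup) (he1 : G.Adj x x''')
    (he2 : G.Adj x' x'') (i : Fin 8) : ∃ u v, G.Adj u v ∧ i ∈ blanusaRoute x x' x'' x''' u v := by
  have hi : i ∈ [0, 3, 4, 7] ∨ i ∈ [2, 1, 6, 5] := by fin_cases i <;> simp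
  rcases hi with hi | hi
  · exact ⟨x, x''', he1, blanusaRoute_first ▸ hi⟩
  · exact ⟨x', x'', he2, blanusaRoute_second hdist ▸ hi⟩

lemma blanusaPathSpan_le_blanusaInsert :
    blanusaPathSpan G x x' x'' x''' ≤ blanusaInsert G x x' x'' x''' := by
  refine fromEdgeSet_mono (Set.union_subset_union_right _ ?_)
  simp [Set.insert_subset_iff, Sym2.eq_swap]

lemma blanusaPathSpan_adj_of_infix_first {a b : V ⊕ Fin 8}
    (hab : [a, b] <:+: routeSupport (blanusaRoute x x' x'' x''') x x''') :
    (blanusaPathSpan G x x' x'' x''').Adj a b := by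
  simp [routeSupport, blanusaRoute_first, List.infix_cons_iff] at hab
  refine (fromEdgeSet_adj _).mpr ⟨Or.inr ?_, ?_⟩ <;>
    rcases hab with ⟨rfl, rfl⟩ | ⟨rfl, rfl⟩ | ⟨rfl, rfl⟩ | ⟨rfl, rfl⟩ | ⟨rfl, rfl⟩ <;>
    simp [Sym2.eq_swap]

lemma blanusaPathSpan_adj_of_infix_second (hdist : [x, x', x'', x'''].Nodup)
    {a b : V ⊕ Fin 8} (hab : [a, b] <:+: routeSupport (blanusaRoute x x' x'' x''') x' x'') :
    (blanusaPathSpan G x x' x'' x''').Adj a b := by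
  simp [routeSupport, blanusaRoute_second hdist, List.infix_cons_iff] at hab
  refine (fromEdgeSet_adj _).mpr ⟨Or.inr ?_, ?_⟩ <;>
    rcases hab with ⟨rfl, rfl⟩ | ⟨rfl, rfl⟩ | ⟨rfl, rfl⟩ | ⟨rfl, rfl⟩ | ⟨rfl, rfl⟩ <;>
    simp [Sym2.eq_swap]

lemma blanusaPathSpan_adj_of_infix (hdist : [x, x', x'', x'''].Nodup) {u v : V}
    {a b : V ⊕ Fin 8} (huv : s(u, v) = s(x, x''') ∨ s(u, v) = s(x', x''))
    (hab : [a, b] <:+: routeSupport (blanusaRoute x x' x'' x''') u v) :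
    (blanusaPathSpan G x x' x'' x''').Adj a b := by
  have hswap := infix_routeSupport_swap (blanusaRoute_swap hdist _ _) hab
  rw [Sym2.eq_iff, Sym2.eq_iff] at huv
  rcases huv with (⟨rfl, rfl⟩ | ⟨rfl, rfl⟩) | (⟨rfl, rfl⟩ | ⟨rfl, rfl⟩)
  · exact blanusaPathSpan_adj_of_infix_first hab
  · exact (blanusaPathSpan_adj_of_infix_first hswap).symm
  · exact blanusaPathSpan_adj_of_infix_second hdist hab
  · exact (blanusaPathSpan_adj_of_infix_second hdist hswap).symm

lemma subdivide_blanusaRoute_le (hdist : [x, x', x'', x'''].Nodup) :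
    subdivide G (blanusaRoute x x' x'' x''') ≤ blanusaPathSpan G x x' x'' x''' := by
  refine edgeSet_subset_edgeSet.mp fun e he => ?_
  rw [subdivide, edgeSet_fromEdgeSet] at he
  obtain ⟨⟨u, v, h, a, b, hab, rfl⟩, -⟩ := he
  by_cases huv : s(u, v) = s(x, x''') ∨ s(u, v) = s(x', x'')
  · exact blanusaPathSpan_adj_of_infix hdist huv hab
  · rw [not_or] at huv
    simp [routeSupport, blanusaRoute_eq_nil huv.1 huv.2, List.infix_cons_iff] at hab
    obtain ⟨rfl, rfl⟩ := hab
    exact (fromEdgeSet_adj _).mpr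
      ⟨Or.inl ⟨s(u, v), ⟨h, by simp [huv.1, huv.2]⟩, rfl⟩, by simpa using h.ne⟩

lemma blanusaPathSpan_le_subdivide (hdist : [x, x', x'', x'''].Nodup) (he1 : G.Adj x x''')
    (he2 : G.Adj x' x'') :
    blanusaPathSpan G x x' x'' x''' ≤ subdivide G (blanusaRoute x x' x'' x''') := by
  refine fromEdgeSet_mono ?_
  rintro _ (⟨e, ⟨hG, hne⟩, rfl⟩ | he)
  · induction e using Sym2.ind with
    | _ u v =>
      simp only [Set.mem_insert_iff, Set.mem_singleton_iff, not_or] at hne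
      refine ⟨u, v, hG, _, _, ?_, rfl⟩
      simp [routeSupport, blanusaRoute_eq_nil hne.1 hne.2]
  · simp only [Set.mem_insert_iff, Set.mem_singleton_iff] at he
    rcases he with rfl | rfl | rfl | rfl | rfl | rfl | rfl | rfl | rfl | rfl
    all_goals first
      | refine ⟨x, x''', he1, ?_⟩
        simp [routeSupport, blanusaRoute_first, List.infix_cons_iff, or_and_right, exists_or,
          Sym2.eq_swap]
        done
      | refine ⟨x', x'', he2, ?_⟩
        simp [routeSupport, blanusaRoute_second hdist, List.infix_cons_iff, or_and_right,
          exists_or, Sym2.eq_swap]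

lemma blanusaPathSpan_eq_subdivide (hdist : [x, x', x'', x'''].Nodup) (he1 : G.Adj x x''')
    (he2 : G.Adj x' x'') :
    blanusaPathSpan G x x' x'' x''' = subdivide G (blanusaRoute x x' x'' x''') :=
  (blanusaPathSpan_le_subdivide hdist he1 he2).antisymm (subdivide_blanusaRoute_le hdist)

end Blanusa

theorem blanusaInsert_spanning_subdivision_general
    {V : Type*} (G : SimpleGraph V) (x x' x'' x''' : V)
    (he1 : G.Adj x x''') (he2 : G.Adj x' x'')
    (hdist : [x, x', x'', x'''].Nodup) :
    blanusaPathSpan G x x' x'' x''' ≤ blanusaInsert G x x' x'' x''' ∧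
    IsSubdivisionOf (blanusaPathSpan G x x' x'' x''') G := by
  refine ⟨blanusaPathSpan_le_blanusaInsert, ?_⟩
  rw [blanusaPathSpan_eq_subdivide hdist he1 he2]
  exact isSubdivisionOf_subdivide (fun u v _ => blanusaRoute_nodup u v)
    (fun u v _ => blanusaRoute_swap hdist u v)
    (fun u v u' v' i _ _ => sym2_eq_of_mem_blanusaRoute hdist u v u' v' i)
    (exists_mem_blanusaRoute hdist he1 he2)

/-- `G*` contains a spanning subgraph homeomorphic to `G`, namely
`(G \ {x x''', x' x''})` together with the two paths `x u₀ u₃ u₄ u₇ x'''` and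
`x' u₂ u₁ u₆ u₅ x''` through the inserted block. -/
theorem blanusaInsert_spanning_subdivision
    {V : Type*} [Fintype V] (G : SimpleGraph V) (x x' x'' x''' : V)
    (hcubic : IsCubic G)
    (he1 : G.Adj x x''') (he2 : G.Adj x' x'')
    (hdist : [x, x', x'', x'''].Nodup) :
    blanusaPathSpan G x x' x'' x''' ≤ blanusaInsert G x x' x'' x''' ∧
    IsSubdivisionOf (blanusaPathSpan G x x' x'' x''') G :=
  blanusaInsert_spanning_subdivision_general G x x' x'' x''' he1 he2 hdist
end
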